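/- arXiv:2003.04847 — 3 statements merged into one kernel-verified Lean document; each statement's English description precedes it below -/
import Mathlib

section
/- Fix x ∈ P₁ and a pair (i,j) ∈ {(1,3), (1,4), (2,3), (2,4)}. Let (𝓛_x^{(2)})^{2,(i,j)-good} ⊆ 𝓛_x^{(2)} × 𝓛_x^{(2)} be the set of pairs ((L₁, y₁, y₂), (L₂, y₃, y₄)) for which y_i and y_j are distinct and Sp(y_i, y_j) ∈ 𝓛_{P₁}^f (where y₁, y₂ come from the first triple and y₃, y₄ from the second). Then ℘_{(𝓛_x^{(2)})²}((𝓛_x^{(2)})^{2,(i,j)-good}) ≥ 1 − (ε + (q−1)/(q^{n+1}−1)) · ((q^{n+1}−q)/(q^{n+1}−1))^{−2}. -/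
open Projectivization

/-- A *line* in the projective space `ℙ K V`: the set of points represented by the nonzero
vectors of a `2`-dimensional subspace of `V`. -/
def IsLine (K : Type*) [DivisionRing K] {V : Type*} [AddCommGroup V] [Module K V]
    (L : Set (Projectivization K V)) : Prop :=
  ∃ W : Submodule K V, Module.finrank K W = 2 ∧ L = {p | p.submodule ≤ W}

/-- `Sp y y'`: the set of points whose representatives lie in the span of representatives of
`y` and `y'`.  For `y ≠ y'` this is the unique line through `y` and `y'`. -/
def Sp {K : Type*} [DivisionRing K] {V : Type*} [AddCommGroup V] [Module K V]
    (y y' : Projectivization K V) : Set (Projectivization K V) :=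
  {p | p.submodule ≤ y.submodule ⊔ y'.submodule}

/-- `℘_S(T) = #T / #S`, the proportion of a (finite) set `T` inside a (finite) set `S`. -/
noncomputable def ratio {α : Type*} (S T : Set α) : ℝ := (T.ncard : ℝ) / (S.ncard : ℝ)

/-- The quantity `A(q,n,ε)`. -/
noncomputable def Aqne (q n : ℕ) (ε : ℝ) : ℝ :=
  2 * (ε + ((q : ℝ) - 1) / ((q : ℝ) ^ (n + 1) - 1)) *
      ((((q : ℝ) ^ (n + 1) - q) / ((q : ℝ) ^ (n + 1) - 1)) ^ 2)⁻¹ +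
    ((q : ℝ) - 1) ^ 2 / ((q : ℝ) ^ (n + 1) - q)

/-- The quantity `B(q,n,ε)`. -/
noncomputable def Bqne (q n : ℕ) (ε : ℝ) : ℝ :=
  2 * ((q : ℝ) - 1) * (((q : ℝ) ^ (n + 1) - 1) / ((q : ℝ) ^ (n + 1) - q)) *
      (2 * ε + 2 * Aqne q n ε + 2 * (q : ℝ) ^ 2 * ((q : ℝ) + 1) ^ 2 / ((q : ℝ) ^ (n + 1) - q)) +
    2 * Aqne q n ε + 2 * (q : ℝ) ^ 2 * ((q : ℝ) + 1) ^ 2 / ((q : ℝ) ^ (n + 1) - q)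

/-- The set `𝓛ₓ⁽²⁾` of triples `(L, y₁, y₂)` where `L` is a line through `x` and `y₁, y₂` are
two distinct points of `L ∖ {x}`. -/
def L2 {K : Type*} [DivisionRing K] {V : Type*} [AddCommGroup V] [Module K V]
    (x : Projectivization K V) :
    Set (Set (Projectivization K V) × Projectivization K V × Projectivization K V) :=
  {t | IsLine K t.1 ∧ x ∈ t.1 ∧ t.2.1 ∈ t.1 ∧ t.2.2 ∈ t.1 ∧
    t.2.1 ≠ x ∧ t.2.2 ≠ x ∧ t.2.1 ≠ t.2.2}

/-- The set `𝓢 ⊆ (𝓛ₓ⁽²⁾)²` of pairs `((L₁,y₁,y₂),(L₂,y₃,y₄))` such that `y₁ ≠ y₃`, `y₂ ≠ y₄`,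
both `Sp(y₁,y₃)` and `Sp(y₂,y₄)` are lines whose image under `f` is a line, and the lines
`Sp(f y₁, f y₂)` and `Sp(f y₃, f y₄)` intersect in exactly one point. -/
def Sset {𝔽 : Type*} [Field 𝔽] {V₁ V₂ : Type*} [AddCommGroup V₁] [Module 𝔽 V₁]
    [AddCommGroup V₂] [Module 𝔽 V₂]
    (f : Projectivization 𝔽 V₁ → Projectivization 𝔽 V₂) (x : Projectivization 𝔽 V₁) :
    Set ((Set (Projectivization 𝔽 V₁) × Projectivization 𝔽 V₁ × Projectivization 𝔽 V₁) ×
      (Set (Projectivization 𝔽 V₁) × Projectivization 𝔽 V₁ × Projectivization 𝔽 V₁)) :=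
  {p | p.1 ∈ L2 x ∧ p.2 ∈ L2 x ∧ p.1.2.1 ≠ p.2.2.1 ∧ p.1.2.2 ≠ p.2.2.2 ∧
    IsLine 𝔽 (Sp p.1.2.1 p.2.2.1) ∧ IsLine 𝔽 (f '' Sp p.1.2.1 p.2.2.1) ∧
    IsLine 𝔽 (Sp p.1.2.2 p.2.2.2) ∧ IsLine 𝔽 (f '' Sp p.1.2.2 p.2.2.2) ∧
    ∃! z, z ∈ Sp (f p.1.2.1) (f p.1.2.2) ∩ Sp (f p.2.2.1) (f p.2.2.2)}

/-- The subset `𝓢_z ⊆ 𝓢` of pairs whose unique intersection point is `z`. -/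
def Sz {𝔽 : Type*} [Field 𝔽] {V₁ V₂ : Type*} [AddCommGroup V₁] [Module 𝔽 V₁]
    [AddCommGroup V₂] [Module 𝔽 V₂]
    (f : Projectivization 𝔽 V₁ → Projectivization 𝔽 V₂) (x : Projectivization 𝔽 V₁)
    (z : Projectivization 𝔽 V₂) :
    Set ((Set (Projectivization 𝔽 V₁) × Projectivization 𝔽 V₁ × Projectivization 𝔽 V₁) ×
      (Set (Projectivization 𝔽 V₁) × Projectivization 𝔽 V₁ × Projectivization 𝔽 V₁)) :=
  {p | p ∈ Sset f x ∧
    Sp (f p.1.2.1) (f p.1.2.2) ∩ Sp (f p.2.2.1) (f p.2.2.2) = {z}}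

open Set Module
open scoped LinearAlgebra.Projectivization

/-!
Write `N = #P₁`, so that `q^(n+1) - 1 = N (q - 1)` and `q^(n+1) - q = (N - 1)(q - 1)`.
Every point `y ≠ x` is the first (and also the second) marked point of exactly `q - 1`
elements of `𝓛ₓ⁽²⁾`, so `#𝓛ₓ⁽²⁾ = (q - 1)(N - 1)`, and sending a pair of marked lines to its
selected points `(y_i, y_j)` is at most `(q - 1)²`-to-one. A pair is bad only if `y_i = y_j`
(`N` choices) or `y_i ≠ y_j` span a line not carried to a line by `f`. Counting ordered pairs
of distinct points line by line gives `(q + 1) q · #𝓛_{P₁} = N (N - 1)`, so there are at most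
`ε N (N - 1)` pairs of the second kind. The proportion of bad pairs is therefore at most
`(N + ε N (N - 1)) / (N - 1)² ≤ (ε + 1/N) (N / (N - 1))²`, which is the stated bound.
-/

namespace Set

variable {α β : Type*}

theorem ncard_offDiag {s : Set α} (hs : s.Finite) :
    s.offDiag.ncard = s.ncard * (s.ncard - 1) := by
  classical
  lift s to Finset α using hs
  rw [← Finset.coe_offDiag, ncard_coe_finset, ncard_coe_finset, Finset.offDiag_card,
    Nat.mul_sub_one]

theorem ncard_diagonal : (diagonal α).ncard = Nat.card α := by
  rw [← range_diag, ncard_range_of_injective (fun a b h => congrArg Prod.fst h)]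

variable [Finite α] [Finite β] {f : α → β} {s : Set α} {t : Set β}

theorem ncard_le_mul_of_mapsTo (hf : MapsTo f s t) (k : ℕ)
    (hk : ∀ b ∈ t, {a ∈ s | f a = b}.ncard ≤ k) : s.ncard ≤ k * t.ncard := by
  classical
  have := Fintype.ofFinite α; have := Fintype.ofFinite β
  simp only [ncard_eq_toFinset_card'] at hk ⊢
  refine Finset.card_le_mul_card_image_of_maps_to
    (fun a ha => by simpa using hf (by simpa using ha)) k fun b hb => ?_
  convert hk b (by simpa using hb) using 2
  ext; simp

theorem ncard_eq_mul_of_mapsTo (hf : MapsTo f s t) (k : ℕ)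
    (hk : ∀ b ∈ t, {a ∈ s | f a = b}.ncard = k) : s.ncard = k * t.ncard := by
  classical
  have := Fintype.ofFinite α; have := Fintype.ofFinite β
  simp only [ncard_eq_toFinset_card'] at hk ⊢
  rw [Finset.card_eq_sum_card_fiberwise (t := t.toFinset) (f := f)
    (fun a ha => by simpa using hf (by simpa using ha)), Finset.sum_const_nat fun b hb => ?_,
    mul_comm]
  convert hk b (by simpa using hb) using 2
  ext; simp

end Set

theorem one_sub_le_ratio_iff {α : Type*} {S T : Set α} (hS : S.Finite) (hpos : 0 < S.ncard)
    (hTS : T ⊆ S) {c : ℝ} : 1 - c ≤ ratio S T ↔ ((S \ T).ncard : ℝ) ≤ c * S.ncard := by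
  have hpos' : (0 : ℝ) < S.ncard := by exact_mod_cast hpos
  rw [ratio, le_div_iff₀ hpos', ncard_sdiff hTS (hS.subset hTS),
    Nat.cast_sub (ncard_le_ncard hTS hS)]
  constructor <;> intro h <;> linarith

section Lines

variable {K : Type*} [Field K] {V : Type*} [AddCommGroup V] [Module K V]

theorem left_mem_Sp (y y' : ℙ K V) : y ∈ Sp y y' := show y.submodule ≤ _ from le_sup_left

theorem right_mem_Sp (y y' : ℙ K V) : y' ∈ Sp y y' := show y'.submodule ≤ _ from le_sup_right

theorem finrank_submodule_sup_eq_two {y y' : ℙ K V} (h : y ≠ y') :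
    finrank K ↥(y.submodule ⊔ y'.submodule) = 2 := by
  have hspan : y.submodule ⊔ y'.submodule = Submodule.span K (range ![y.rep, y'.rep]) := by
    rw [submodule_eq, submodule_eq, ← Submodule.span_union, Matrix.range_cons_cons_empty]
    rfl
  rw [hspan, finrank_span_eq_card (linearIndependent_pair_iff_ne.2 h), Fintype.card_fin]

theorem isLine_Sp {y y' : ℙ K V} (h : y ≠ y') : IsLine K (Sp y y') :=
  ⟨_, finrank_submodule_sup_eq_two h, rfl⟩

theorem IsLine.eq_Sp {L : Set (ℙ K V)} (hL : IsLine K L) {y y' : ℙ K V}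
    (hy : y ∈ L) (hy' : y' ∈ L) (h : y ≠ y') : L = Sp y y' := by
  obtain ⟨W, hW, rfl⟩ := hL
  have : FiniteDimensional K W := .of_finrank_pos (by omega)
  have hsup : y.submodule ⊔ y'.submodule = W :=
    Submodule.eq_of_le_of_finrank_le (sup_le hy hy') (by rw [hW, finrank_submodule_sup_eq_two h])
  simp only [Sp, hsup]

theorem setOf_submodule_le_eq_range (W : Submodule K V) :
    {p : ℙ K V | p.submodule ≤ W} =
      range (Projectivization.map W.subtype W.injective_subtype) := by
  ext p
  constructor
  · induction p using Projectivization.ind with | h v hv => ?_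
    intro hvW
    rw [mem_ofPred_eq, submodule_mk, Submodule.span_singleton_le_iff_mem] at hvW
    exact ⟨mk K ⟨v, hvW⟩ (by simpa using hv), by rw [map_mk]; rfl⟩
  · rintro ⟨w, rfl⟩
    induction w using Projectivization.ind with | h u hu => ?_
    rw [map_mk, mem_ofPred_eq, submodule_mk, Submodule.span_singleton_le_iff_mem]
    exact u.2

theorem IsLine.ncard_eq [Finite K] {L : Set (ℙ K V)} (hL : IsLine K L) :
    L.ncard = Nat.card K + 1 := by
  obtain ⟨W, hW, rfl⟩ := hL
  rw [setOf_submodule_le_eq_range, ncard_range_of_injective (map_injective _ _),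
    card_of_finrank_two K W hW]

theorem ncard_Sp_diff_pair [Finite K] {y y' : ℙ K V} (h : y ≠ y') :
    (Sp y y' \ {y, y'}).ncard = Nat.card K - 1 := by
  rw [ncard_sdiff (pair_subset (left_mem_Sp y y') (right_mem_Sp y y')), (isLine_Sp h).ncard_eq,
    ncard_pair h]
  omega

end Lines

section MarkedLines

variable {K : Type*} [Field K] {V : Type*} [AddCommGroup V] [Module K V] {x y : ℙ K V}

theorem setOf_mem_L2_fst_eq (hy : y ≠ x) :
    {t ∈ L2 x | t.2.1 = y} = (fun z => (Sp x y, y, z)) '' (Sp x y \ {x, y}) := by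
  ext ⟨L, a, b⟩
  constructor
  · rintro ⟨⟨hL, hxL, haL, hbL, hax, hbx, hab⟩, rfl : a = y⟩
    have hLa : L = Sp x a := hL.eq_Sp hxL haL (Ne.symm hax)
    exact ⟨b, ⟨hLa ▸ hbL, by simp [hbx, Ne.symm hab]⟩, by rw [hLa]⟩
  · rintro ⟨z, ⟨hz, hzxy⟩, ⟨⟩⟩
    simp only [mem_insert_iff, mem_singleton_iff, not_or] at hzxy
    exact ⟨⟨isLine_Sp (Ne.symm hy), left_mem_Sp x y, right_mem_Sp x y, hz, hy, hzxy.1,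
      Ne.symm hzxy.2⟩, rfl⟩

theorem swap_mem_L2 {t : Set (ℙ K V) × ℙ K V × ℙ K V} :
    (t.1, t.2.2, t.2.1) ∈ L2 x ↔ t ∈ L2 x := by
  simp only [L2, mem_ofPred_eq, ne_comm (a := t.2.2) (b := t.2.1)]
  tauto

theorem setOf_mem_L2_snd_eq :
    {t ∈ L2 x | t.2.2 = y} = (fun t => (t.1, t.2.2, t.2.1)) '' {t ∈ L2 x | t.2.1 = y} := by
  ext ⟨L, a, b⟩
  constructor
  · rintro ⟨ht, rfl⟩
    exact ⟨(L, b, a), ⟨swap_mem_L2.2 ht, rfl⟩, rfl⟩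
  · rintro ⟨⟨L', a', b'⟩, ⟨ht, rfl⟩, ⟨⟩⟩
    exact ⟨swap_mem_L2.2 ht, rfl⟩

variable [Finite K]

theorem ncard_L2_fiber_fst (hy : y ≠ x) : {t ∈ L2 x | t.2.1 = y}.ncard = Nat.card K - 1 := by
  rw [setOf_mem_L2_fst_eq hy, ncard_image_of_injective _ fun z z' h => by simpa using h,
    ncard_Sp_diff_pair (Ne.symm hy)]

theorem ncard_L2_fiber_snd (hy : y ≠ x) : {t ∈ L2 x | t.2.2 = y}.ncard = Nat.card K - 1 := by
  rw [setOf_mem_L2_snd_eq, ncard_image_of_injective _ fun t t' h => by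
    simpa [Prod.ext_iff, and_comm] using h, ncard_L2_fiber_fst hy]

theorem ncard_L2_fiber_ite_le (c : Prop) [Decidable c] (y : ℙ K V) :
    {t ∈ L2 x | (if c then t.2.1 else t.2.2) = y}.ncard ≤ Nat.card K - 1 := by
  rcases eq_or_ne y x with rfl | hy
  · have : {t ∈ L2 y | (if c then t.2.1 else t.2.2) = y} = ∅ :=
      eq_empty_of_forall_notMem fun t ⟨ht, hty⟩ => by
        split_ifs at hty
        exacts [ht.2.2.2.2.1 hty, ht.2.2.2.2.2.1 hty]
    simp [this]
  · split_ifs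
    exacts [(ncard_L2_fiber_fst hy).le, (ncard_L2_fiber_snd hy).le]

theorem ncard_L2 [Finite V] : (L2 x).ncard = (Nat.card K - 1) * (Nat.card (ℙ K V) - 1) := by
  rw [ncard_eq_mul_of_mapsTo (t := {x}ᶜ) (fun t ht => ht.2.2.2.2.1) _
    fun y hy => ncard_L2_fiber_fst hy, ncard_compl, ncard_singleton]

end MarkedLines

section LineCounts

variable {K : Type*} [Field K] {V : Type*} [AddCommGroup V] [Module K V]

theorem IsLine.setOf_Sp_eq {L : Set (ℙ K V)} (hL : IsLine K L) :
    {yz ∈ (univ : Set (ℙ K V)).offDiag | Sp yz.1 yz.2 = L} = L.offDiag := by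
  ext ⟨a, b⟩
  constructor
  · rintro ⟨⟨-, -, hab⟩, rfl⟩
    exact ⟨left_mem_Sp a b, right_mem_Sp a b, hab⟩
  · rintro ⟨haL, hbL, hab⟩
    exact ⟨⟨trivial, trivial, hab⟩, (hL.eq_Sp haL hbL hab).symm⟩

variable [Finite K] [Finite V]

theorem IsLine.ncard_offDiag {L : Set (ℙ K V)} (hL : IsLine K L) :
    L.offDiag.ncard = (Nat.card K + 1) * Nat.card K := by
  rw [Set.ncard_offDiag (toFinite L), hL.ncard_eq, Nat.add_sub_cancel]

theorem mul_ncard_setOf_isLine : (Nat.card K + 1) * Nat.card K * {L : Set (ℙ K V) | IsLine K L}.ncard =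
    Nat.card (ℙ K V) * (Nat.card (ℙ K V) - 1) := by
  rw [← ncard_univ (ℙ K V), ← Set.ncard_offDiag (toFinite _)]
  refine (ncard_eq_mul_of_mapsTo (s := univ.offDiag) (t := {L | IsLine K L})
    (fun yz hyz => isLine_Sp hyz.2.2) _ fun L hL => ?_).symm
  rw [hL.setOf_Sp_eq, hL.ncard_offDiag]

theorem ncard_pairs_Sp_notMem_le (G : Set (Set (ℙ K V))) :
    {yz : ℙ K V × ℙ K V | yz.1 ≠ yz.2 ∧ Sp yz.1 yz.2 ∉ G}.ncard ≤
      (Nat.card K + 1) * Nat.card K * ({L | IsLine K L} \ G).ncard := by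
  refine ncard_le_mul_of_mapsTo (t := {L | IsLine K L} \ G)
    (fun yz hyz => ⟨isLine_Sp hyz.1, hyz.2⟩) _ fun L hL => ?_
  rw [← hL.1.ncard_offDiag]
  refine ncard_le_ncard ?_
  rintro ⟨a, b⟩ ⟨⟨hab, -⟩, rfl⟩
  exact ⟨left_mem_Sp a b, right_mem_Sp a b, hab⟩

theorem ncard_pairs_Sp_notMem_le_of_ratio {G : Set (Set (ℙ K V))} (hGL : G ⊆ {L | IsLine K L})
    {ε : ℝ} (hG : 1 - ε ≤ ratio {L | IsLine K L} G) (hN : 2 ≤ Nat.card (ℙ K V)) :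
    ({yz : ℙ K V × ℙ K V | yz.1 ≠ yz.2 ∧ Sp yz.1 yz.2 ∉ G}.ncard : ℝ) ≤
      ε * (Nat.card (ℙ K V) * (Nat.card (ℙ K V) - 1)) := by
  obtain ⟨a, b, hab⟩ := (Finite.one_lt_card_iff_nontrivial.1 hN).exists_pair_ne
  have hpos : 0 < {L : Set (ℙ K V) | IsLine K L}.ncard :=
    (ncard_pos (toFinite _)).2 ⟨Sp a b, isLine_Sp hab⟩
  have hbadLines : (({L | IsLine K L} \ G).ncard : ℝ) ≤ ε * {L | IsLine K L}.ncard :=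
    (one_sub_le_ratio_iff (toFinite _) hpos hGL).1 hG
  calc _ ≤ (((Nat.card K + 1) * Nat.card K * ({L | IsLine K L} \ G).ncard : ℕ) : ℝ) := by
        exact_mod_cast ncard_pairs_Sp_notMem_le G
    _ ≤ ((Nat.card K + 1) * Nat.card K : ℕ) * (ε * {L | IsLine K L}.ncard) := by
        push_cast
        gcongr
    _ = ε * (Nat.card (ℙ K V) * (Nat.card (ℙ K V) - 1)) := by
        rw [← Nat.cast_pred (by omega), ← Nat.cast_mul, ← mul_ncard_setOf_isLine]
        push_cast
        ring

end LineCounts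

section Estimate

variable {K : Type*} [Field K] {V : Type*} [AddCommGroup V] [Module K V] [Finite V]
  {x : ℙ K V}

theorem ncard_L2_prod_diff_le (G : Set (Set (ℙ K V)))
    {g₁ g₂ : Set (ℙ K V) × ℙ K V × ℙ K V → ℙ K V}
    (hg₁ : ∀ y, {t ∈ L2 x | g₁ t = y}.ncard ≤ Nat.card K - 1)
    (hg₂ : ∀ y, {t ∈ L2 x | g₂ t = y}.ncard ≤ Nat.card K - 1) :
    ((L2 x ×ˢ L2 x) \ {p | p.1 ∈ L2 x ∧ p.2 ∈ L2 x ∧ g₁ p.1 ≠ g₂ p.2 ∧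
        Sp (g₁ p.1) (g₂ p.2) ∈ G}).ncard ≤
      (Nat.card K - 1) ^ 2 *
        (Nat.card (ℙ K V) + {yz : ℙ K V × ℙ K V | yz.1 ≠ yz.2 ∧ Sp yz.1 yz.2 ∉ G}.ncard) := by
  set D := diagonal (ℙ K V) ∪ {yz : ℙ K V × ℙ K V | yz.1 ≠ yz.2 ∧ Sp yz.1 yz.2 ∉ G}
  have hD : D.ncard ≤
      Nat.card (ℙ K V) + {yz : ℙ K V × ℙ K V | yz.1 ≠ yz.2 ∧ Sp yz.1 yz.2 ∉ G}.ncard :=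
    ncard_diagonal (α := ℙ K V) ▸ ncard_union_le _ _
  refine (ncard_le_mul_of_mapsTo (t := D) (f := fun p => (g₁ p.1, g₂ p.2)) ?_ _
    fun b _ => ?_).trans (Nat.mul_le_mul_left _ hD)
  · rintro p ⟨⟨hp₁, hp₂⟩, hpT⟩
    by_cases h : g₁ p.1 = g₂ p.2
    · exact Or.inl h
    · exact Or.inr ⟨h, fun hG => hpT ⟨hp₁, hp₂, h, hG⟩⟩
  · calc _ ≤ ({t ∈ L2 x | g₁ t = b.1} ×ˢ {t ∈ L2 x | g₂ t = b.2}).ncard := by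
          refine ncard_le_ncard ?_
          rintro p ⟨⟨⟨hp₁, hp₂⟩, -⟩, rfl⟩
          exact ⟨⟨hp₁, rfl⟩, hp₂, rfl⟩
      _ ≤ (Nat.card K - 1) ^ 2 := by
          rw [ncard_prod, sq]
          exact Nat.mul_le_mul (hg₁ _) (hg₂ _)

theorem one_sub_le_ratio_L2_prod [Finite K] {G : Set (Set (ℙ K V))} (hGL : G ⊆ {L | IsLine K L})
    {ε : ℝ} (hε : 0 ≤ ε) (hG : 1 - ε ≤ ratio {L | IsLine K L} G) (hN : 2 ≤ Nat.card (ℙ K V))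
    {g₁ g₂ : Set (ℙ K V) × ℙ K V × ℙ K V → ℙ K V}
    (hg₁ : ∀ y, {t ∈ L2 x | g₁ t = y}.ncard ≤ Nat.card K - 1)
    (hg₂ : ∀ y, {t ∈ L2 x | g₂ t = y}.ncard ≤ Nat.card K - 1) :
    1 - (ε + 1 / Nat.card (ℙ K V)) * ((Nat.card (ℙ K V) : ℝ) / (Nat.card (ℙ K V) - 1)) ^ 2 ≤
      ratio (L2 x ×ˢ L2 x)
        {p | p.1 ∈ L2 x ∧ p.2 ∈ L2 x ∧ g₁ p.1 ≠ g₂ p.2 ∧ Sp (g₁ p.1) (g₂ p.2) ∈ G} := by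
  set N := Nat.card (ℙ K V)
  have hq : 1 < Nat.card K := Finite.one_lt_card
  have hbadPairs := ncard_pairs_Sp_notMem_le_of_ratio hGL hG hN
  have hS : (L2 x ×ˢ L2 x).ncard = ((Nat.card K - 1) * (N - 1)) ^ 2 := by
    rw [ncard_prod, ncard_L2, sq]
  have hSpos : 0 < (L2 x ×ˢ L2 x).ncard := by
    rw [hS]
    have := Nat.mul_pos (Nat.sub_pos_of_lt hq) (Nat.sub_pos_of_lt hN)
    positivity
  rw [one_sub_le_ratio_iff (toFinite _) hSpos fun p hp => mem_prod.2 ⟨hp.1, hp.2.1⟩, hS]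
  have hN1 : (1 : ℝ) < N := by exact_mod_cast hN
  calc _ ≤ ((Nat.card K - 1 : ℕ) : ℝ) ^ 2 *
        (N + {yz : ℙ K V × ℙ K V | yz.1 ≠ yz.2 ∧ Sp yz.1 yz.2 ∉ G}.ncard) := by
        exact_mod_cast ncard_L2_prod_diff_le G hg₁ hg₂
    _ ≤ ((Nat.card K - 1 : ℕ) : ℝ) ^ 2 * (ε * N ^ 2 + N) := by
        refine mul_le_mul_of_nonneg_left ?_ (by positivity)
        nlinarith [mul_nonneg hε (by positivity : (0 : ℝ) ≤ N)]
    _ = _ := by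
        have : (N : ℝ) - 1 ≠ 0 := by linarith
        push_cast [Nat.cast_pred (show 0 < N by omega)]
        field_simp

end Estimate

theorem bound_eq_of_pow_eq_mul_add_one {q N ε : ℝ} {n : ℕ} (hq : 1 < q) (hN : 1 < N)
    (hqN : q ^ (n + 1) = N * (q - 1) + 1) :
    (ε + (q - 1) / (q ^ (n + 1) - 1)) * (((q ^ (n + 1) - q) / (q ^ (n + 1) - 1)) ^ 2)⁻¹ =
      (ε + 1 / N) * (N / (N - 1)) ^ 2 := by
  have hq1 : q - 1 ≠ 0 := by linarith
  have hN1 : N - 1 ≠ 0 := by linarith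
  rw [hqN, show N * (q - 1) + 1 - 1 = N * (q - 1) by ring,
    show N * (q - 1) + 1 - q = (N - 1) * (q - 1) by ring]
  field_simp

theorem ratio_ij_good_general
    {𝔽 : Type*} [Field 𝔽] [Fintype 𝔽] (q : ℕ) (hq : Fintype.card 𝔽 = q)
    {V₁ V₂ : Type*} [AddCommGroup V₁] [Module 𝔽 V₁] [AddCommGroup V₂] [Module 𝔽 V₂]
    (n : ℕ) (hn : 3 < n)
    (hV₁ : Module.finrank 𝔽 V₁ = n + 1)
    (f : Projectivization 𝔽 V₁ → Projectivization 𝔽 V₂)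
    (ε : ℝ) (hε : 0 < ε)
    (hlines : 1 - ε ≤ ratio {L | IsLine 𝔽 L} {L | IsLine 𝔽 L ∧ IsLine 𝔽 (f '' L)})
    (x : Projectivization 𝔽 V₁) (i j : ℕ) :
    1 - (ε + ((q : ℝ) - 1) / ((q : ℝ) ^ (n + 1) - 1)) *
        ((((q : ℝ) ^ (n + 1) - q) / ((q : ℝ) ^ (n + 1) - 1)) ^ 2)⁻¹ ≤
      ratio (L2 x ×ˢ L2 x)
        {p | p.1 ∈ L2 x ∧ p.2 ∈ L2 x ∧
          (if i = 1 then p.1.2.1 else p.1.2.2) ≠ (if j = 3 then p.2.2.1 else p.2.2.2) ∧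
          IsLine 𝔽 (Sp (if i = 1 then p.1.2.1 else p.1.2.2)
            (if j = 3 then p.2.2.1 else p.2.2.2)) ∧
          IsLine 𝔽 (f '' Sp (if i = 1 then p.1.2.1 else p.1.2.2)
            (if j = 3 then p.2.2.1 else p.2.2.2))} := by
  have : FiniteDimensional 𝔽 V₁ := .of_finrank_pos (by omega)
  have : Finite V₁ := Module.finite_of_finite 𝔽
  have hq' : Nat.card 𝔽 = q := Nat.card_eq_fintype_card.trans hq
  have hq2 : 1 < q := hq' ▸ Finite.one_lt_card
  have hcard : Nat.card (ℙ 𝔽 V₁) * (q - 1) + 1 = q ^ (n + 1) := by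
    rw [← hq', ← hV₁, ← Module.natCard_eq_pow_finrank, Projectivization.card' 𝔽 V₁]
  have hN : 2 ≤ Nat.card (ℙ 𝔽 V₁) := by
    have : q ^ 2 ≤ q ^ (n + 1) := Nat.pow_le_pow_right (by omega) (by omega)
    by_contra! h
    have : Nat.card (ℙ 𝔽 V₁) * (q - 1) ≤ 1 * (q - 1) := Nat.mul_le_mul_right _ (by omega)
    nlinarith [Nat.sub_add_cancel hq2.le]
  have hcardR : (q : ℝ) ^ (n + 1) = Nat.card (ℙ 𝔽 V₁) * ((q : ℝ) - 1) + 1 := by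
    rw [← Nat.cast_pred (by omega), ← Nat.cast_pow, ← hcard]
    push_cast
    ring
  rw [bound_eq_of_pow_eq_mul_add_one (by exact_mod_cast hq2) (by exact_mod_cast hN) hcardR]
  exact one_sub_le_ratio_L2_prod (fun L hL => hL.1) hε.le hlines hN
    (g₁ := fun t => if i = 1 then t.2.1 else t.2.2)
    (g₂ := fun t => if j = 3 then t.2.1 else t.2.2)
    (ncard_L2_fiber_ite_le _) (ncard_L2_fiber_ite_le _)

/-- For a fixed point `x` and a fixed pair `(i,j) ∈ {(1,3),(1,4),(2,3),(2,4)}`, the proportion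
of pairs of marked lines through `x` whose `i`-th and `j`-th marked points are distinct and
span a line carried by `f` to a line is at least
`1 - (ε + (q-1)/(q^(n+1)-1)) · ((q^(n+1)-q)/(q^(n+1)-1))⁻²`. -/
theorem ratio_ij_good
    {𝔽 : Type*} [Field 𝔽] [Fintype 𝔽] (q : ℕ) (hq : Fintype.card 𝔽 = q)
    {V₁ V₂ : Type*} [AddCommGroup V₁] [Module 𝔽 V₁] [AddCommGroup V₂] [Module 𝔽 V₂]
    (n : ℕ) (hn : 3 < n)
    (hV₁ : Module.finrank 𝔽 V₁ = n + 1) (hV₂ : Module.finrank 𝔽 V₂ = n + 1)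
    (f : Projectivization 𝔽 V₁ → Projectivization 𝔽 V₂) (hf : Function.Injective f)
    (ε : ℝ) (hε : 0 < ε)
    (hlines : 1 - ε ≤ ratio {L | IsLine 𝔽 L} {L | IsLine 𝔽 L ∧ IsLine 𝔽 (f '' L)})
    (x : Projectivization 𝔽 V₁) (i j : ℕ) (hi : i = 1 ∨ i = 2) (hj : j = 3 ∨ j = 4) :
    1 - (ε + ((q : ℝ) - 1) / ((q : ℝ) ^ (n + 1) - 1)) *
        ((((q : ℝ) ^ (n + 1) - q) / ((q : ℝ) ^ (n + 1) - 1)) ^ 2)⁻¹ ≤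
      ratio (L2 x ×ˢ L2 x)
        {p | p.1 ∈ L2 x ∧ p.2 ∈ L2 x ∧
          (if i = 1 then p.1.2.1 else p.1.2.2) ≠ (if j = 3 then p.2.2.1 else p.2.2.2) ∧
          IsLine 𝔽 (Sp (if i = 1 then p.1.2.1 else p.1.2.2)
            (if j = 3 then p.2.2.1 else p.2.2.2)) ∧
          IsLine 𝔽 (f '' Sp (if i = 1 then p.1.2.1 else p.1.2.2)
            (if j = 3 then p.2.2.1 else p.2.2.2))} :=
  ratio_ij_good_general q hq n hn hV₁ f ε hε hlines x i j
end

section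
/- Let P₁^{f=f′} ⊆ P₁ be the set of points x with f(x) = f′(x). Then ℘_{P₁}(P₁^{f=f′}) ≥ 1 − 2ε − 2·A(q,n,ε) − 2q²(q+1)²/(q^{n+1}−q). -/
open Projectivization

section AuxGeometry

variable {K : Type*} [Field K] {V : Type*} [AddCommGroup V] [Module K V]

lemma finrank_sup_eq_two {a b : Projectivization K V} (hab : a ≠ b) :
    Module.finrank K ↥(a.submodule ⊔ b.submodule) = 2 := by
  have h1 : Module.finrank K a.submodule = 1 := a.finrank_submodule
  have h2 : Module.finrank K b.submodule = 1 := b.finrank_submodule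
  have key := Submodule.finrank_sup_add_finrank_inf_eq a.submodule b.submodule
  have hne : a.submodule ≠ b.submodule := fun h => hab (Projectivization.submodule_injective h)
  have hinf : Module.finrank K ↥(a.submodule ⊓ b.submodule) = 0 := by
    by_contra h
    have : a.submodule ⊓ b.submodule = a.submodule :=
      Submodule.eq_of_le_of_finrank_le inf_le_left (by omega)
    exact hne (Submodule.eq_of_le_of_finrank_le (this ▸ inf_le_right) (by omega))
  omega

/-- A line containing two distinct points equals their span-line. -/
lemma line_eq_sp {L : Set (Projectivization K V)} (hL : IsLine K L)
    {a b : Projectivization K V} (ha : a ∈ L) (hb : b ∈ L) (hab : a ≠ b) : L = Sp a b := by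
  obtain ⟨W, hW2, rfl⟩ := hL
  have hWfd : FiniteDimensional K W := FiniteDimensional.of_finrank_pos (by omega)
  have hsub : a.submodule ⊔ b.submodule ≤ W := sup_le ha hb
  have : a.submodule ⊔ b.submodule = W :=
    Submodule.eq_of_le_of_finrank_le hsub (by rw [finrank_sup_eq_two hab, hW2])
  ext p; simp only [Sp, Set.mem_setOf_eq, this]

/-- For nonzero `v`, `mk v = p` iff `v ∈ p.submodule`. -/
lemma mk_eq_iff_mem [FiniteDimensional K V] {v : V} (hv : v ≠ 0) (p : Projectivization K V) :
    Projectivization.mk K v hv = p ↔ v ∈ p.submodule := by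
  constructor
  · rintro rfl
    rw [Projectivization.submodule_mk]
    exact Submodule.mem_span_singleton_self v
  · intro h
    apply Projectivization.submodule_injective
    rw [Projectivization.submodule_mk]
    apply Submodule.eq_of_le_of_finrank_le
    · rwa [Submodule.span_singleton_le_iff_mem]
    · rw [p.finrank_submodule, finrank_span_singleton hv]

lemma quot_rank [FiniteDimensional K V] {p W : Submodule K V} (h : p ≤ W) :
    Module.finrank K ↥(W.map p.mkQ) + Module.finrank K ↥p = Module.finrank K ↥W := by
  have hr : LinearMap.range ((p.mkQ).comp W.subtype) = W.map p.mkQ := by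
    rw [LinearMap.range_comp, Submodule.range_subtype]
  have hk : LinearMap.ker ((p.mkQ).comp W.subtype) = Submodule.comap W.subtype p := by
    rw [LinearMap.ker_comp, Submodule.ker_mkQ]
  have h2 := LinearMap.finrank_range_add_finrank_ker ((p.mkQ).comp W.subtype)
  rw [hr, hk] at h2
  rw [← h2]
  congr 1
  exact (Submodule.comapSubtypeEquivOfLe h).finrank_eq.symm

lemma ncard_prod_set {α β : Type*} (s : Set α) (t : Set β) :
    (s ×ˢ t).ncard = s.ncard * t.ncard := by
  rw [← Nat.card_coe_set_eq, ← Nat.card_coe_set_eq, ← Nat.card_coe_set_eq,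
    ← Nat.card_prod]
  exact Nat.card_congr (Equiv.Set.prod s t)

end AuxGeometry

section AuxCounting

variable {K : Type*} [Field K] {V : Type*} [AddCommGroup V] [Module K V]
variable [Fintype K] [Finite V]

/-- Fiber-counting: `(q-1) * #{p | p.submodule ≤ W} + 1 = q ^ finrank W`. -/
lemma count_sub (W : Submodule K V) :
    (Fintype.card K - 1) * {p : Projectivization K V | p.submodule ≤ W}.ncard + 1
      = Fintype.card K ^ (Module.finrank K W) := by
  classical
  have hfd : FiniteDimensional K V := inferInstance
  have := Fintype.ofFinite V
  have : Finite (Projectivization K V) := Quotient.finite _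
  have : Fintype (Projectivization K V) := Fintype.ofFinite _
  set q := Fintype.card K with hq
  have hq2 : 2 ≤ q := Fintype.one_lt_card
  set T : Finset (Projectivization K V) := Finset.univ.filter (fun p => p.submodule ≤ W) with hT
  set S : Finset V := Finset.univ.filter (fun v => v ∈ W ∧ v ≠ 0) with hS
  have hfiber : ∀ p ∈ T, (Finset.univ.filter (fun v : V => v ∈ p.submodule ∧ v ≠ 0)).card
      = q - 1 := by
    intro p _
    have h1 : (Finset.univ.filter (fun v : V => v ∈ p.submodule ∧ v ≠ 0)).card
        = Fintype.card {v : V // v ∈ p.submodule ∧ v ≠ 0} := (Fintype.card_subtype _).symm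
    have e : {v : V // v ∈ p.submodule ∧ v ≠ 0} ≃ {w : p.submodule // w ≠ 0} :=
      { toFun := fun v => ⟨⟨v.1, v.2.1⟩, fun h => v.2.2 (by simpa [Subtype.ext_iff] using h)⟩
        invFun := fun w => ⟨w.1.1, w.1.2, fun h => w.2 (by exact Subtype.ext h)⟩
        left_inv := fun v => rfl
        right_inv := fun w => rfl }
    have h2 : Fintype.card {w : p.submodule // w ≠ 0} = Fintype.card p.submodule - 1 := by
      simp [Fintype.card_subtype_compl]
    have h3 : Fintype.card p.submodule = q ^ (1 : ℕ) := by
      rw [hq, ← p.finrank_submodule]; exact Module.card_eq_pow_finrank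
    rw [h1, Fintype.card_congr e, h2, h3, pow_one]
  have hcover : S = T.biUnion (fun p => Finset.univ.filter
      (fun v : V => v ∈ p.submodule ∧ v ≠ 0)) := by
    ext v
    simp only [hS, Finset.mem_filter, Finset.mem_univ, true_and, Finset.mem_biUnion, hT]
    constructor
    · rintro ⟨hvW, hv0⟩
      exact ⟨Projectivization.mk K v hv0,
        by rw [Projectivization.submodule_mk]; rwa [Submodule.span_singleton_le_iff_mem],
        by rw [Projectivization.submodule_mk]; exact Submodule.mem_span_singleton_self v, hv0⟩
    · rintro ⟨p, hpW, hvp, hv0⟩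
      exact ⟨hpW hvp, hv0⟩
  have hdisj : ∀ p ∈ T, ∀ p' ∈ T, p ≠ p' → Disjoint
      (Finset.univ.filter (fun v : V => v ∈ p.submodule ∧ v ≠ 0))
      (Finset.univ.filter (fun v : V => v ∈ p'.submodule ∧ v ≠ 0)) := by
    intro p _ p' _ hne
    rw [Finset.disjoint_left]
    rintro v hv hv'
    simp only [Finset.mem_filter, Finset.mem_univ, true_and] at hv hv'
    exact hne (((mk_eq_iff_mem hv.2 p).2 hv.1).symm.trans ((mk_eq_iff_mem hv.2 p').2 hv'.1))
  have hScard : S.card = T.card * (q - 1) := by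
    rw [hcover, Finset.card_biUnion hdisj]
    rw [Finset.sum_congr rfl hfiber, Finset.sum_const, smul_eq_mul]
  have hW : Fintype.card W = q ^ (Module.finrank K W) := Module.card_eq_pow_finrank
  have hSW : S.card + 1 = Fintype.card W := by
    have h1 : S.card = Fintype.card {v : V // v ∈ W ∧ v ≠ 0} := by
      rw [hS, ← Fintype.card_subtype]
    have e : {v : V // v ∈ W ∧ v ≠ 0} ≃ {w : W // w ≠ 0} :=
      { toFun := fun v => ⟨⟨v.1, v.2.1⟩, fun h => v.2.2 (by simpa [Subtype.ext_iff] using h)⟩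
        invFun := fun w => ⟨w.1.1, w.1.2, fun h => w.2 (by exact Subtype.ext h)⟩
        left_inv := fun v => rfl
        right_inv := fun w => rfl }
    have h2 : Fintype.card {w : W // w ≠ 0} = Fintype.card W - 1 := by
      simp [Fintype.card_subtype_compl]
    have hpos : 1 ≤ Fintype.card W := Fintype.card_pos
    rw [h1, Fintype.card_congr e, h2]
    omega
  have hset : {p : Projectivization K V | p.submodule ≤ W} = (T : Set (Projectivization K V)) := by
    ext p; simp [hT]
  rw [hset, Set.ncard_coe_finset, ← hW, ← hSW, hScard]
  ring

lemma card_proj : (Fintype.card K - 1) * Nat.card (Projectivization K V) + 1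
    = Fintype.card K ^ (Module.finrank K V) := by
  have h := count_sub (K := K) (V := V) ⊤
  rw [finrank_top] at h
  rw [← h]
  congr 2
  rw [← Set.ncard_univ]
  congr 1
  ext p; simp

lemma sub_line_ncard {W : Submodule K V} (hW : Module.finrank K W = 2) :
    {p : Projectivization K V | p.submodule ≤ W}.ncard = Fintype.card K + 1 := by
  have h := count_sub (K := K) (V := V) W
  rw [hW] at h
  have hq2 : 2 ≤ Fintype.card K := Fintype.one_lt_card
  obtain ⟨m, hm⟩ : ∃ m, Fintype.card K = m + 2 := ⟨Fintype.card K - 2, by omega⟩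
  rw [hm] at h ⊢
  have h2 : (m + 2) ^ 2 = (m + 1) * (m + 3) + 1 := by ring
  have h3 := h.trans h2
  have h4 : (m+1) * {p : Projectivization K V | p.submodule ≤ W}.ncard = (m+1) * (m+3) :=
    Nat.add_right_cancel h3
  have := Nat.eq_of_mul_eq_mul_left (show 0 < m + 1 by omega) h4
  omega

lemma line_ncard {L : Set (Projectivization K V)} (hL : IsLine K L) :
    L.ncard = Fintype.card K + 1 := by
  obtain ⟨W, hW, rfl⟩ := hL
  exact sub_line_ncard hW

/-- A 2-dimensional subspace is determined by its set of points. -/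
lemma line_subspace_unique {W W' : Submodule K V} (h : Module.finrank K W = 2)
    (h' : Module.finrank K W' = 2)
    (hss : {p : Projectivization K V | p.submodule ≤ W}
      = {p : Projectivization K V | p.submodule ≤ W'}) : W = W' := by
  have hfd : FiniteDimensional K V := inferInstance
  have hfinP : Finite (Projectivization K V) := Quotient.finite _
  have hcard : 1 < {p : Projectivization K V | p.submodule ≤ W}.ncard := by
    rw [sub_line_ncard h]
    have : 2 ≤ Fintype.card K := Fintype.one_lt_card
    omega
  rw [Set.one_lt_ncard_iff] at hcard
  obtain ⟨a, b, ha, hb, hab⟩ := hcard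
  have hsup : a.submodule ⊔ b.submodule = W := by
    apply Submodule.eq_of_le_of_finrank_le (sup_le ha hb)
    rw [finrank_sup_eq_two hab, h]
  have ha' : a ∈ {p : Projectivization K V | p.submodule ≤ W'} := hss ▸ ha
  have hb' : b ∈ {p : Projectivization K V | p.submodule ≤ W'} := hss ▸ hb
  have hle : W ≤ W' := by rw [← hsup]; exact sup_le ha' hb'
  exact Submodule.eq_of_le_of_finrank_le hle (by omega)

/-- Lines through `x` are in bijection with the projectivization of `V ⧸ x.submodule`. -/
lemma lineThru_card (x : Projectivization K V) :
    {L : Set (Projectivization K V) | IsLine K L ∧ x ∈ L}.ncard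
      = Nat.card (Projectivization K (V ⧸ x.submodule)) := by
  classical
  have hfd : FiniteDimensional K V := inferInstance
  set p := x.submodule with hp
  have hp1 : Module.finrank K ↥p = 1 := x.finrank_submodule
  have hW2 : ∀ P : Projectivization K (V ⧸ p),
      Module.finrank K ↥(Submodule.comap p.mkQ P.submodule) = 2 := by
    intro P
    have hle : p ≤ Submodule.comap p.mkQ P.submodule := Submodule.le_comap_mkQ p _
    have hmap : (Submodule.comap p.mkQ P.submodule).map p.mkQ = P.submodule :=
      Submodule.map_comap_eq_of_surjective (Submodule.mkQ_surjective p) _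
    have := quot_rank hle
    rw [hmap, P.finrank_submodule, hp1] at this
    omega
  have hxmem : ∀ P : Projectivization K (V ⧸ p),
      x.submodule ≤ Submodule.comap p.mkQ P.submodule := by
    intro P
    exact Submodule.le_comap_mkQ p _
  let Φ : Projectivization K (V ⧸ p)
      → {L : Set (Projectivization K V) | IsLine K L ∧ x ∈ L} := fun P =>
    ⟨{z | z.submodule ≤ Submodule.comap p.mkQ P.submodule},
      ⟨⟨_, hW2 P, rfl⟩, hxmem P⟩⟩
  have hbij : Function.Bijective Φ := by
    constructor
    · intro P P' hPP'
      have hsets : {z : Projectivization K V | z.submodule ≤ Submodule.comap p.mkQ P.submodule}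
          = {z | z.submodule ≤ Submodule.comap p.mkQ P'.submodule} := congrArg Subtype.val hPP'
      have hWW : Submodule.comap p.mkQ P.submodule = Submodule.comap p.mkQ P'.submodule :=
        line_subspace_unique (hW2 P) (hW2 P') hsets
      have : P.submodule = P'.submodule := by
        have h1 := Submodule.map_comap_eq_of_surjective (Submodule.mkQ_surjective p) P.submodule
        have h2 := Submodule.map_comap_eq_of_surjective (Submodule.mkQ_surjective p) P'.submodule
        rw [← h1, ← h2, hWW]
      exact Projectivization.submodule_injective this
    · rintro ⟨L, ⟨W, hW, rfl⟩, hxL⟩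
      have hpW : p ≤ W := hxL
      have hU1 : Module.finrank K ↥(W.map p.mkQ) = 1 := by
        have := quot_rank hpW
        rw [hp1, hW] at this
        omega
      refine ⟨Projectivization.mk'' (W.map p.mkQ) hU1, ?_⟩
      apply Subtype.ext
      show {z : Projectivization K V | z.submodule ≤ _} = _
      rw [Projectivization.submodule_mk'']
      have : Submodule.comap p.mkQ (W.map p.mkQ) = W := by
        rw [Submodule.comap_map_mkQ, sup_eq_right.2 hpW]
      rw [this]
  rw [← Nat.card_coe_set_eq, Nat.card_congr (Equiv.ofBijective Φ hbij).symm]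

lemma L2_filter_count (x : Projectivization K V) (S : Set (Set (Projectivization K V)))
    (hS : ∀ L ∈ S, IsLine K L ∧ x ∈ L) :
    {t | t ∈ L2 x ∧ t.1 ∈ S}.ncard
      = S.ncard * (Fintype.card K * (Fintype.card K - 1)) := by
  classical
  have hfinP : Finite (Projectivization K V) := Quotient.finite _
  have : Fintype (Projectivization K V) := Fintype.ofFinite _
  have : Fintype (Set (Projectivization K V)) := Fintype.ofFinite _
  set q := Fintype.card K with hq
  have hq2 : 2 ≤ q := Fintype.one_lt_card
  set SF : Finset (Set (Projectivization K V)) := Finset.univ.filter (· ∈ S) with hSF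
  have hSFcard : SF.card = S.ncard := by
    rw [← Set.ncard_coe_finset]; congr 1; ext L; simp [hSF]
  have hinj : ∀ L : Set (Projectivization K V), Function.Injective
      (fun yz : Projectivization K V × Projectivization K V => (L, yz.1, yz.2)) := by
    intro L a b hab
    simp only [Prod.mk.injEq] at hab
    exact Prod.ext hab.2.1 hab.2.2
  set F : Set (Projectivization K V) → Finset
      (Set (Projectivization K V) × Projectivization K V × Projectivization K V) :=
    fun L => ((L \ {x}).toFinite.toFinset.offDiag).map
      ⟨fun yz => (L, yz.1, yz.2), hinj L⟩ with hF
  have hmemF : ∀ L t, t ∈ F L ↔ t.1 = L ∧ (t.2.1 ∈ L ∧ t.2.1 ≠ x) ∧ (t.2.2 ∈ L ∧ t.2.2 ≠ x)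
      ∧ t.2.1 ≠ t.2.2 := by
    intro L t
    simp only [hF, Finset.mem_map, Finset.mem_offDiag, Set.Finite.mem_toFinset,
      Set.mem_diff, Set.mem_singleton_iff, Function.Embedding.coeFn_mk]
    constructor
    · rintro ⟨⟨y, z⟩, ⟨⟨hy, hy'⟩, ⟨hz, hz'⟩, hyz⟩, rfl⟩
      exact ⟨rfl, ⟨hy, hy'⟩, ⟨hz, hz'⟩, hyz⟩
    · rintro ⟨h1, ⟨hy, hy'⟩, ⟨hz, hz'⟩, hyz⟩
      exact ⟨(t.2.1, t.2.2), ⟨⟨hy, hy'⟩, ⟨hz, hz'⟩, hyz⟩, by rw [← h1]⟩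
  have hcover : {t | t ∈ L2 x ∧ t.1 ∈ S} = ↑(SF.biUnion F) := by
    ext t
    simp only [Set.mem_setOf_eq, Finset.coe_biUnion, Set.mem_iUnion, Finset.mem_coe,
      Finset.mem_biUnion]
    constructor
    · rintro ⟨⟨_, _, h3, h4, h5, h6, h7⟩, htS⟩
      exact ⟨t.1, by simp [hSF, htS], (hmemF t.1 t).2 ⟨rfl, ⟨h3, h5⟩, ⟨h4, h6⟩, h7⟩⟩
    · rintro ⟨L, hL, htL⟩
      obtain ⟨h1, ⟨hy, hy'⟩, ⟨hz, hz'⟩, hyz⟩ := (hmemF L t).1 htL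
      have hLS : L ∈ S := by simpa [hSF] using hL
      obtain ⟨hline, hxL⟩ := hS L hLS
      exact ⟨⟨h1 ▸ hline, h1 ▸ hxL, h1 ▸ hy, h1 ▸ hz, hy', hz', hyz⟩, h1 ▸ hLS⟩
  have hdisj : ∀ L ∈ SF, ∀ L' ∈ SF, L ≠ L' → Disjoint (F L) (F L') := by
    intro L _ L' _ hne
    rw [Finset.disjoint_left]
    intro t ht ht'
    exact hne (((hmemF L t).1 ht).1.symm.trans ((hmemF L' t).1 ht').1)
  have hcardF : ∀ L ∈ SF, (F L).card = q * (q - 1) := by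
    intro L hL
    have hLS : L ∈ S := by simpa [hSF] using hL
    obtain ⟨hline, hxL⟩ := hS L hLS
    have hL1 : (L \ {x}).toFinite.toFinset.card = q := by
      rw [Set.Finite.card_toFinset]
      have h1 : (L \ {x}).ncard = L.ncard - 1 := Set.ncard_diff_singleton_of_mem hxL
      have h2 : L.ncard = q + 1 := line_ncard hline
      rw [← Nat.card_eq_fintype_card, Nat.card_coe_set_eq]
      omega
    rw [hF]
    simp only [Finset.card_map, Finset.offDiag_card, hL1]
    obtain ⟨m, hm⟩ : ∃ m, q = m + 2 := ⟨q - 2, by omega⟩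
    rw [hm]
    have h5 : m + 2 - 1 = m + 1 := rfl
    rw [h5]
    have : (m+2)*(m+2) = (m+2)*(m+1) + (m+2) := by ring
    omega
  rw [hcover, Set.ncard_coe_finset, Finset.card_biUnion hdisj]
  rw [Finset.sum_congr rfl hcardF, Finset.sum_const, smul_eq_mul, hSFcard]

lemma incidence [Fintype (Projectivization K V)] (S : Set (Set (Projectivization K V)))
    (hS : ∀ L ∈ S, IsLine K L) :
    ∑ x : Projectivization K V, {L | L ∈ S ∧ x ∈ L}.ncard
      = S.ncard * (Fintype.card K + 1) := by
  classical
  have : Fintype (Set (Projectivization K V)) := Fintype.ofFinite _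
  set SF : Finset (Set (Projectivization K V)) := Finset.univ.filter (· ∈ S) with hSF
  have hSFcard : SF.card = S.ncard := by
    rw [← Set.ncard_coe_finset]; congr 1; ext L; simp [hSF]
  have hterm : ∀ x : Projectivization K V,
      {L | L ∈ S ∧ x ∈ L}.ncard = ∑ L ∈ SF, if x ∈ L then 1 else 0 := by
    intro x
    rw [← Finset.card_filter]
    rw [← Set.ncard_coe_finset]
    congr 1; ext L; simp [hSF]
  calc ∑ x : Projectivization K V, {L | L ∈ S ∧ x ∈ L}.ncard
      = ∑ x : Projectivization K V, ∑ L ∈ SF, if x ∈ L then 1 else 0 := by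
        exact Finset.sum_congr rfl (fun x _ => hterm x)
    _ = ∑ L ∈ SF, ∑ x : Projectivization K V, if x ∈ L then 1 else 0 := Finset.sum_comm
    _ = ∑ L ∈ SF, L.ncard := by
        refine Finset.sum_congr rfl (fun L hL => ?_)
        rw [← Finset.card_filter, ← Set.ncard_coe_finset]
        congr 1; ext p; simp
    _ = ∑ L ∈ SF, (Fintype.card K + 1) := by
        refine Finset.sum_congr rfl (fun L hL => ?_)
        exact line_ncard (hS L (by simpa [hSF] using hL))
    _ = S.ncard * (Fintype.card K + 1) := by
        rw [Finset.sum_const, smul_eq_mul, hSFcard]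

end AuxCounting

set_option maxHeartbeats 1600000 in
/-- The map `f'` (defined by sending `x` to the unique point `z` with
`℘((𝓛ₓ⁽²⁾)²)(𝓢_z) ≥ 1/2`) agrees with `f` on a proportion of points of `P₁` at least
`1 - 2ε - 2A(q,n,ε) - 2q²(q+1)²/(q^(n+1)-q)`. -/
theorem ratio_f_eq_f'
    {𝔽 : Type*} [Field 𝔽] [Fintype 𝔽] (q : ℕ) (hq : Fintype.card 𝔽 = q)
    {V₁ V₂ : Type*} [AddCommGroup V₁] [Module 𝔽 V₁] [AddCommGroup V₂] [Module 𝔽 V₂]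
    (n : ℕ) (hn : 3 < n)
    (hV₁ : Module.finrank 𝔽 V₁ = n + 1) (hV₂ : Module.finrank 𝔽 V₂ = n + 1)
    (f : Projectivization 𝔽 V₁ → Projectivization 𝔽 V₂) (hf : Function.Injective f)
    (ε : ℝ) (hε : 0 < ε)
    (hlines : 1 - ε ≤ ratio {L | IsLine 𝔽 L} {L | IsLine 𝔽 L ∧ IsLine 𝔽 (f '' L)})
    (hA : 2 * Aqne q n ε + 2 * (q : ℝ) ^ 2 * ((q : ℝ) + 1) ^ 2 / ((q : ℝ) ^ (n + 1) - q) < 1 / 2)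
    (f' : Projectivization 𝔽 V₁ → Projectivization 𝔽 V₂)
    (hf' : ∀ x : Projectivization 𝔽 V₁, 1 / 2 ≤ ratio (L2 x ×ˢ L2 x) (Sz f x (f' x))) :
    1 - 2 * ε - 2 * Aqne q n ε - 2 * (q : ℝ) ^ 2 * ((q : ℝ) + 1) ^ 2 / ((q : ℝ) ^ (n + 1) - q) ≤
      ratio Set.univ {x : Projectivization 𝔽 V₁ | f x = f' x} := by
  classical
  subst hq
  set q := Fintype.card 𝔽 with hq
  have hq2 : 2 ≤ q := Fintype.one_lt_card
  have hfd1 : FiniteDimensional 𝔽 V₁ := FiniteDimensional.of_finrank_pos (by rw [hV₁]; omega)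
  have hfinV1 : Finite V₁ := Module.finite_of_finite 𝔽
  have hfinP : Finite (Projectivization 𝔽 V₁) := Quotient.finite _
  have hFP : Fintype (Projectivization 𝔽 V₁) := Fintype.ofFinite _
  -- real basics
  have hqR : (2:ℝ) ≤ (q:ℝ) := by exact_mod_cast hq2
  have hQ1 : (1:ℝ) < (q:ℝ) ^ (n+1) := by
    apply one_lt_pow₀ (by linarith) (by omega)
  have hQq : (q:ℝ) < (q:ℝ) ^ (n+1) := by
    calc (q:ℝ) = (q:ℝ) ^ 1 := (pow_one _).symm
    _ < (q:ℝ) ^ (n+1) := by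
        apply pow_lt_pow_right₀ (by linarith) (by omega)
  -- the sets of lines
  set Lines : Set (Set (Projectivization 𝔽 V₁)) := {L | IsLine 𝔽 L} with hLines
  set GLset : Set (Set (Projectivization 𝔽 V₁)) := {L | IsLine 𝔽 L ∧ IsLine 𝔽 (f '' L)} with hGLset
  set Bad : Set (Set (Projectivization 𝔽 V₁)) :=
    {L | IsLine 𝔽 L ∧ ¬ IsLine 𝔽 (f '' L)} with hBad
  have hBadLines : (Bad.ncard : ℝ) ≤ ε * Lines.ncard := by
    rcases Nat.eq_zero_or_pos Lines.ncard with h0 | hpos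
    · have hsub : Bad ⊆ Lines := fun L hL => hL.1
      have hle : Bad.ncard ≤ Lines.ncard := Set.ncard_le_ncard hsub (Set.toFinite _)
      rw [h0] at hle
      rw [Nat.le_zero.mp hle, h0]
      simp
    · have hGLsetsub : GLset ⊆ Lines := fun L hL => hL.1
      have hdiff : Bad = Lines \ GLset := by
        ext L
        simp only [hBad, hGLset, hLines, Set.mem_setOf_eq, Set.mem_diff]
        tauto
      have hGLc2 : GLset.ncard ≤ Lines.ncard := Set.ncard_le_ncard hGLsetsub (Set.toFinite _)
      have hBn : Bad.ncard = Lines.ncard - GLset.ncard := by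
        rw [hdiff]; exact Set.ncard_diff hGLsetsub (Set.toFinite _)
      have hLpos : (0:ℝ) < Lines.ncard := by exact_mod_cast hpos
      have hrat : (1 - ε) * Lines.ncard ≤ GLset.ncard := by
        have h := hlines
        simp only [ratio] at h
        rw [le_div_iff₀ hLpos] at h
        exact h
      have hcast : (Bad.ncard : ℝ) = (Lines.ncard : ℝ) - GLset.ncard := by
        rw [hBn, Nat.cast_sub hGLc2]
      linarith
  -- the number of lines through a point
  have hMx : ∀ x : Projectivization 𝔽 V₁,
      (q - 1) * {L | IsLine 𝔽 L ∧ x ∈ L}.ncard + 1 = q ^ n := by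
    intro x
    have hfinQ : Finite (V₁ ⧸ x.submodule) := Quotient.finite _
    have h1 := lineThru_card (K := 𝔽) x
    have h2 := card_proj (K := 𝔽) (V := V₁ ⧸ x.submodule)
    have h3 : Module.finrank 𝔽 (V₁ ⧸ x.submodule) = n := by
      have h4 := Submodule.finrank_quotient_add_finrank x.submodule
      rw [hV₁, x.finrank_submodule] at h4
      omega
    rw [h3] at h2
    rw [h1]
    exact h2
  -- the bad set of points
  set B : Set (Projectivization 𝔽 V₁) := {x | ¬ f x = f' x} with hB
  have hkey : ∀ x ∈ B, {L | IsLine 𝔽 L ∧ x ∈ L}.ncard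
      ≤ 4 * {L | L ∈ Bad ∧ x ∈ L}.ncard := by
    intro x hxB
    have hfx : f x ≠ f' x := hxB
    have hLT : ∀ L ∈ {L : Set (Projectivization 𝔽 V₁) | IsLine 𝔽 L ∧ x ∈ L},
        IsLine 𝔽 L ∧ x ∈ L := fun L hL => hL
    have hl2 : {t | t ∈ L2 x ∧ t.1 ∈ {L : Set (Projectivization 𝔽 V₁) | IsLine 𝔽 L ∧ x ∈ L}}
        = L2 x := by
      ext t
      constructor
      · exact fun h => h.1
      · intro ht
        exact ⟨ht, ht.1, ht.2.1⟩
    have hL2card : (L2 x).ncard = {L | IsLine 𝔽 L ∧ x ∈ L}.ncard * (q * (q-1)) := by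
      rw [← hl2]
      exact L2_filter_count x _ hLT
    set BT : Set (Set (Projectivization 𝔽 V₁)) := {L | L ∈ Bad ∧ x ∈ L} with hBT
    have hBTsub : ∀ L ∈ BT, IsLine 𝔽 L ∧ x ∈ L := fun L hL => ⟨hL.1.1, hL.2⟩
    set T1 := {t | t ∈ L2 x ∧ t.1 ∈ BT} with hT1
    have hT1card : T1.ncard = BT.ncard * (q * (q-1)) := L2_filter_count x _ hBTsub
    -- Claim 1 : geometry
    have hsub : Sz f x (f' x) ⊆ (T1 ×ˢ L2 x) ∪ (L2 x ×ˢ T1) := by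
      intro p hp
      obtain ⟨hpS, hpEq⟩ := hp
      obtain ⟨hp1, hp2, _, _, _, _, _, _, _⟩ := hpS
      obtain ⟨hL1line, hxL1, hy1, hy2, _, _, hy12⟩ := hp1
      obtain ⟨hL2line, hxL2, hy3, hy4, _, _, hy34⟩ := hp2
      have hp1' : p.1 ∈ L2 x := ⟨hL1line, hxL1, hy1, hy2, by assumption, by assumption, hy12⟩
      have hp2' : p.2 ∈ L2 x := ⟨hL2line, hxL2, hy3, hy4, by assumption, by assumption, hy34⟩
      by_cases hg1 : IsLine 𝔽 (f '' p.1.1)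
      · by_cases hg2 : IsLine 𝔽 (f '' p.2.1)
        · exfalso
          have hfy12 : f p.1.2.1 ≠ f p.1.2.2 := fun h => hy12 (hf h)
          have hfy34 : f p.2.2.1 ≠ f p.2.2.2 := fun h => hy34 (hf h)
          have hEq1 : f '' p.1.1 = Sp (f p.1.2.1) (f p.1.2.2) :=
            line_eq_sp hg1 ⟨_, hy1, rfl⟩ ⟨_, hy2, rfl⟩ hfy12
          have hEq2 : f '' p.2.1 = Sp (f p.2.2.1) (f p.2.2.2) :=
            line_eq_sp hg2 ⟨_, hy3, rfl⟩ ⟨_, hy4, rfl⟩ hfy34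
          have hfx1 : f x ∈ Sp (f p.1.2.1) (f p.1.2.2) := hEq1 ▸ ⟨x, hxL1, rfl⟩
          have hfx2 : f x ∈ Sp (f p.2.2.1) (f p.2.2.2) := hEq2 ▸ ⟨x, hxL2, rfl⟩
          have hmem : f x ∈ Sp (f p.1.2.1) (f p.1.2.2) ∩ Sp (f p.2.2.1) (f p.2.2.2) :=
            ⟨hfx1, hfx2⟩
          rw [hpEq] at hmem
          exact hfx hmem
        · exact Or.inr ⟨hp1', hp2', ⟨hL2line, hg2⟩, hxL2⟩
      · exact Or.inl ⟨⟨hp1', ⟨hL1line, hg1⟩, hxL1⟩, hp2'⟩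
    -- counting
    have hSz_le : (Sz f x (f' x)).ncard ≤ 2 * (BT.ncard * (q*(q-1))) * (L2 x).ncard := by
      calc (Sz f x (f' x)).ncard ≤ ((T1 ×ˢ L2 x) ∪ (L2 x ×ˢ T1)).ncard :=
            Set.ncard_le_ncard hsub (Set.toFinite _)
        _ ≤ (T1 ×ˢ L2 x).ncard + (L2 x ×ˢ T1).ncard := Set.ncard_union_le _ _
        _ = T1.ncard * (L2 x).ncard + (L2 x).ncard * T1.ncard := by
            rw [ncard_prod_set, ncard_prod_set]
        _ = 2 * T1.ncard * (L2 x).ncard := by ring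
        _ = 2 * (BT.ncard * (q*(q-1))) * (L2 x).ncard := by rw [hT1card]
    have hr := hf' x
    simp only [ratio] at hr
    have hDpos : 0 < ((L2 x ×ˢ L2 x).ncard : ℝ) := by
      by_contra hD
      push_neg at hD
      have h0 : ((L2 x ×ˢ L2 x).ncard : ℝ) = 0 :=
        le_antisymm hD (by positivity)
      rw [h0, div_zero] at hr
      linarith
    have hDn : (L2 x ×ˢ L2 x).ncard = (L2 x).ncard * (L2 x).ncard := ncard_prod_set _ _
    have h2 : ((L2 x ×ˢ L2 x).ncard : ℝ) ≤ 2 * (Sz f x (f' x)).ncard := by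
      rw [le_div_iff₀ hDpos] at hr
      linarith
    have h2n : (L2 x ×ˢ L2 x).ncard ≤ 2 * (Sz f x (f' x)).ncard := by exact_mod_cast h2
    rw [hDn] at h2n
    have hchain : (L2 x).ncard * (L2 x).ncard ≤ (4 * (BT.ncard * (q*(q-1)))) * (L2 x).ncard := by
      calc (L2 x).ncard * (L2 x).ncard ≤ 2 * (Sz f x (f' x)).ncard := h2n
        _ ≤ 2 * (2 * (BT.ncard * (q*(q-1))) * (L2 x).ncard) := by
            exact Nat.mul_le_mul_left 2 hSz_le
        _ = (4 * (BT.ncard * (q*(q-1)))) * (L2 x).ncard := by ring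
    have hlpos : 0 < (L2 x).ncard := by
      rcases Nat.eq_zero_or_pos (L2 x).ncard with h0 | h
      · exfalso
        rw [hDn, h0, Nat.mul_zero] at hDpos
        simp at hDpos
      · exact h
    have hfin : (L2 x).ncard ≤ 4 * (BT.ncard * (q*(q-1))) :=
      Nat.le_of_mul_le_mul_right hchain hlpos
    rw [hL2card] at hfin
    have hfin2 : {L | IsLine 𝔽 L ∧ x ∈ L}.ncard * (q*(q-1))
        ≤ (4 * BT.ncard) * (q*(q-1)) := by
      calc {L | IsLine 𝔽 L ∧ x ∈ L}.ncard * (q*(q-1)) ≤ 4 * (BT.ncard * (q*(q-1))) := hfin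
        _ = (4 * BT.ncard) * (q*(q-1)) := by ring
    have hkpos : 0 < q * (q - 1) := Nat.mul_pos (by omega) (by omega)
    exact Nat.le_of_mul_le_mul_right hfin2 hkpos
  -- global counting
  have hNnat := card_proj (K := 𝔽) (V := V₁)
  rw [hV₁, ← hq] at hNnat
  have hq1n : 1 < q ^ (n+1) := Nat.one_lt_pow (by omega) hq2
  have hNpos : 0 < Nat.card (Projectivization 𝔽 V₁) := by
    rcases Nat.eq_zero_or_pos (Nat.card (Projectivization 𝔽 V₁)) with h0 | h
    · rw [h0, Nat.mul_zero] at hNnat; omega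
    · exact h
  obtain ⟨x₀⟩ : Nonempty (Projectivization 𝔽 V₁) := (Nat.card_pos_iff.mp hNpos).1
  set M := {L | IsLine 𝔽 L ∧ x₀ ∈ L}.ncard with hM
  have hMeq : ∀ x : Projectivization 𝔽 V₁, {L | IsLine 𝔽 L ∧ x ∈ L}.ncard = M := by
    intro x
    have h1 := hMx x
    have h2 : (q - 1) * M + 1 = q ^ n := by rw [hM]; exact hMx x₀
    have h3 : (q-1) * {L | IsLine 𝔽 L ∧ x ∈ L}.ncard = (q-1) * M := by omega
    exact Nat.eq_of_mul_eq_mul_left (by omega) h3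
  have hq1n' : 1 < q ^ n := Nat.one_lt_pow (by omega) hq2
  have hMpos : 0 < M := by
    have h2 : (q - 1) * M + 1 = q ^ n := by rw [hM]; exact hMx x₀
    rcases Nat.eq_zero_or_pos M with h0 | h
    · rw [h0, Nat.mul_zero] at h2
      omega
    · exact h
  have hIncLines := incidence (K := 𝔽) (V := V₁) Lines (fun L hL => hL)
  have hIncBad := incidence (K := 𝔽) (V := V₁) Bad (fun L hL => hL.1)
  have hNM : Nat.card (Projectivization 𝔽 V₁) * M = Lines.ncard * (q+1) := by
    calc Nat.card (Projectivization 𝔽 V₁) * M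
        = Fintype.card (Projectivization 𝔽 V₁) * M := by rw [Nat.card_eq_fintype_card]
      _ = ∑ _x : Projectivization 𝔽 V₁, M := by
          rw [Finset.sum_const, smul_eq_mul, Finset.card_univ]
      _ = ∑ x : Projectivization 𝔽 V₁, {L | L ∈ Lines ∧ x ∈ L}.ncard :=
          Finset.sum_congr rfl (fun x _ => (hMeq x).symm)
      _ = Lines.ncard * (q+1) := hIncLines
  have hBsum : B.ncard * M ≤ 4 * (Bad.ncard * (q+1)) := by
    set BF : Finset (Projectivization 𝔽 V₁) := Finset.univ.filter (· ∈ B) with hBF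
    have hBFcard : BF.card = B.ncard := by
      rw [← Set.ncard_coe_finset]; congr 1; ext y; simp [hBF]
    calc B.ncard * M = ∑ _x ∈ BF, M := by rw [Finset.sum_const, smul_eq_mul, hBFcard]
      _ = ∑ x ∈ BF, {L | IsLine 𝔽 L ∧ x ∈ L}.ncard :=
          Finset.sum_congr rfl (fun x _ => (hMeq x).symm)
      _ ≤ ∑ x ∈ BF, 4 * {L | L ∈ Bad ∧ x ∈ L}.ncard :=
          Finset.sum_le_sum (fun x hx => hkey x (by simpa [hBF] using hx))
      _ ≤ ∑ x : Projectivization 𝔽 V₁, 4 * {L | L ∈ Bad ∧ x ∈ L}.ncard :=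
          Finset.sum_le_sum_of_subset (Finset.subset_univ BF)
      _ = 4 * ∑ x : Projectivization 𝔽 V₁, {L | L ∈ Bad ∧ x ∈ L}.ncard := by
          rw [Finset.mul_sum]
      _ = 4 * (Bad.ncard * (q+1)) := by rw [hIncBad]
  -- putting it together over ℝ
  set N := Nat.card (Projectivization 𝔽 V₁) with hN
  have hMR : (0:ℝ) < (M:ℝ) := by exact_mod_cast hMpos
  have hNR : (0:ℝ) < (N:ℝ) := by exact_mod_cast hNpos
  have hBN : (B.ncard : ℝ) ≤ 4 * ε * N := by
    have h1 : (B.ncard : ℝ) * M ≤ 4 * ((Bad.ncard:ℝ) * (q+1)) := by exact_mod_cast hBsum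
    have h2 : ((Bad.ncard:ℝ)) * (q+1) ≤ ε * Lines.ncard * (q+1) := by
      apply mul_le_mul_of_nonneg_right hBadLines
      positivity
    have h3 : (Lines.ncard : ℝ) * (q+1) = N * M := by exact_mod_cast hNM.symm
    have h4 : (B.ncard : ℝ) * M ≤ (4 * ε * N) * M := by
      calc (B.ncard : ℝ) * M ≤ 4 * ((Bad.ncard:ℝ) * (q+1)) := h1
        _ ≤ 4 * (ε * Lines.ncard * (q+1)) := by linarith
        _ = 4 * ε * ((Lines.ncard : ℝ) * (q+1)) := by ring
        _ = 4 * ε * (N * M) := by rw [h3]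
        _ = (4 * ε * N) * M := by ring
    exact le_of_mul_le_mul_right h4 hMR
  -- the complement
  have hG : {x : Projectivization 𝔽 V₁ | f x = f' x} = Bᶜ := by
    ext y
    simp [hB]
  have hGcard : B.ncard + Bᶜ.ncard = N := Set.ncard_add_ncard_compl B
  have hGR : (Bᶜ.ncard : ℝ) = N - B.ncard := by
    have := hGcard
    push_cast [← this]
    ring
  -- A ≥ ε and C ≥ 0
  have hC0 : 0 ≤ 2 * (q:ℝ)^2 * ((q:ℝ)+1)^2 / ((q:ℝ)^(n+1) - q) := by
    apply div_nonneg (by positivity) (by linarith)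
  have hAε : ε ≤ Aqne q n ε := by
    rw [Aqne]
    have ha : 0 ≤ ((q:ℝ)-1)/((q:ℝ)^(n+1)-1) := by
      apply div_nonneg (by linarith) (by linarith)
    have hb : 0 ≤ ((q:ℝ)-1)^2/((q:ℝ)^(n+1)-(q:ℝ)) := by
      apply div_nonneg (by positivity) (by linarith)
    set s := ((q:ℝ)^(n+1) - q) / ((q:ℝ)^(n+1) - 1) with hs
    have hs0 : 0 < s := by
      apply div_pos (by linarith) (by linarith)
    have hs1 : s ≤ 1 := by
      rw [hs, div_le_one (by linarith)]
      linarith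
    have hs2pos : 0 < s^2 := by positivity
    have hs2le1 : s^2 ≤ 1 := pow_le_one₀ hs0.le hs1
    have hinv : 1 ≤ (s^2)⁻¹ := (one_le_inv₀ hs2pos).mpr hs2le1
    have hmain : 2 * ε ≤ 2 * (ε + ((q:ℝ)-1)/((q:ℝ)^(n+1)-1)) * (s^2)⁻¹ := by
      have h1 : 2 * ε ≤ 2 * (ε + ((q:ℝ)-1)/((q:ℝ)^(n+1)-1)) := by linarith
      have h2 : 2 * (ε + ((q:ℝ)-1)/((q:ℝ)^(n+1)-1)) * 1
          ≤ 2 * (ε + ((q:ℝ)-1)/((q:ℝ)^(n+1)-1)) * (s^2)⁻¹ :=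
        mul_le_mul_of_nonneg_left hinv (by linarith)
      linarith
    linarith
  -- final inequality
  simp only [ratio]
  rw [hG, Set.ncard_univ, ← hN]
  rw [le_div_iff₀ hNR]
  have hstep : (1 - 4*ε) * N ≤ (Bᶜ.ncard : ℝ) := by
    rw [hGR]
    nlinarith [hBN]
  calc (1 - 2*ε - 2*Aqne q n ε - 2*(q:ℝ)^2*((q:ℝ)+1)^2/((q:ℝ)^(n+1)-q)) * N
      ≤ (1 - 4*ε) * N := by
        apply mul_le_mul_of_nonneg_right _ hNR.le
        linarith
    _ ≤ (Bᶜ.ncard : ℝ) := hstep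
end

section
/- Let k be a field, V a k-vector space, and a, b, c, d ∈ V linearly independent vectors. Let 𝓟 be the set of the ten points [a], [b], [c], [d], [b−a], [c−a], [d−a], [c−b], [d−b], [c−d] of ℙ(V), and let 𝓜 be the set of the ten lines L_T of ℙ(V), where T ranges over the three-element subsets of the five-element set {0, a, b, c, d} and L_T is the projective line corresponding to the subspace of V spanned by the differences of elements of T (this subspace is 2-dimensional). Then (𝓟, 𝓜) is a Desargues configuration: the ten points are pairwise distinct, the ten lines are pairwise distinct, each line of 𝓜 contains exactly three of the ten points of 𝓟, and each point of 𝓟 lies on exactly three of the ten lines of 𝓜. -/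
open Projectivization

/-- The points of the projective space represented by the nonzero vectors of `vs`
(a vector `v ∈ vs` corresponds to the point whose associated submodule is `span {v}`). -/
def pointsOf (K : Type*) [DivisionRing K] {V : Type*} [AddCommGroup V] [Module K V]
    (vs : Set V) : Set (Projectivization K V) :=
  {p | ∃ v ∈ vs, p.submodule = Submodule.span K {v}}

/-- The subspace spanned by the differences of the elements of `T`. -/
def diffSpan (K : Type*) [DivisionRing K] {V : Type*} [AddCommGroup V] [Module K V]
    (T : Set V) : Submodule K V :=
  Submodule.span K {w | ∃ u ∈ T, ∃ v ∈ T, w = u - v}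

/-- The projective subspace `L_T` corresponding to the span of the differences of elements
of `T`. -/
def lineOf (K : Type*) [DivisionRing K] {V : Type*} [AddCommGroup V] [Module K V]
    (T : Set V) : Set (Projectivization K V) :=
  {p | p.submodule ≤ diffSpan K T}

/-- The ten lines `L_T`, where `T` runs over the three-element subsets of the five-element
(indexed) set `{E 0, E 1, E 2, E 3, E 4}`. -/
def desarguesLines (K : Type*) [DivisionRing K] {V : Type*} [AddCommGroup V] [Module K V]
    (E : Fin 5 → V) : Set (Set (Projectivization K V)) :=
  {L | ∃ s : Finset (Fin 5), s.card = 3 ∧ L = lineOf K (E '' ↑s)}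

/-- A *Desargues configuration*: `10` pairwise distinct points and `10` pairwise distinct
lines such that each of the lines contains exactly `3` of the points and each of the points
lies on exactly `3` of the lines. -/
def IsDesarguesConfig {K : Type*} [DivisionRing K] {V : Type*} [AddCommGroup V] [Module K V]
    (P : Set (Projectivization K V)) (M : Set (Set (Projectivization K V))) : Prop :=
  P.ncard = 10 ∧ M.ncard = 10 ∧ (∀ L ∈ M, (P ∩ L).ncard = 3) ∧
    ∀ p ∈ P, {L | L ∈ M ∧ p ∈ L}.ncard = 3

-- ==== aux below ====
namespace Desarg

def Mz : Fin 10 → Fin 4 → ℤ :=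
  ![![1,0,0,0], ![0,1,0,0], ![0,0,1,0], ![0,0,0,1],
    ![-1,1,0,0], ![-1,0,1,0], ![-1,0,0,1], ![0,-1,1,0], ![0,-1,0,1], ![0,0,1,-1]]

def Xv (k : Type*) [Field k] : Fin 10 → Fin 4 → k := fun i m => ((Mz i m : ℤ) : k)

def g1 : Fin 10 → Fin 10 := ![0,0,0,1,1,2,4,4,5,7]
def g2 : Fin 10 → Fin 10 := ![1,2,3,2,3,3,5,6,6,8]
def g3 : Fin 10 → Fin 10 := ![4,5,6,7,8,9,7,8,9,9]

variable {k : Type*} [Field k] {V : Type*} [AddCommGroup V] [Module k V]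

theorem Xv_int (i : Fin 10) (m : Fin 4) : Xv k i m = ((Mz i m : ℤ) : k) := rfl

theorem dsp_triple (u v w : V) :
    diffSpan k {u, v, w} = Submodule.span k {v - u, w - u} := by
  apply le_antisymm
  · rw [diffSpan, Submodule.span_le]
    rintro x ⟨p, hp, q, hq, rfl⟩
    rw [SetLike.mem_coe, Submodule.mem_span_pair]
    simp only [Set.mem_insert_iff, Set.mem_singleton_iff] at hp hq
    rcases hp with rfl|rfl|rfl <;> rcases hq with rfl|rfl|rfl
    exacts [⟨0,0, by module⟩, ⟨-1,0, by module⟩, ⟨0,-1, by module⟩,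
      ⟨1,0, by module⟩, ⟨0,0, by module⟩, ⟨1,-1, by module⟩,
      ⟨0,1, by module⟩, ⟨-1,1, by module⟩, ⟨0,0, by module⟩]
  · rw [Submodule.span_le]
    rintro x (rfl|rfl)
    · exact Submodule.subset_span ⟨v, by simp, u, by simp, rfl⟩
    · exact Submodule.subset_span ⟨w, by simp, u, by simp, rfl⟩

def fmd (k : Type*) [Field k] {V : Type*} [AddCommGroup V] [Module k V] (a b c d : V) :
    (Fin 4 → k) →ₗ[k] V where
  toFun x := x 0 • a + x 1 • b + x 2 • c + x 3 • d
  map_add' x y := by simp only [Pi.add_apply, add_smul]; abel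
  map_smul' r x := by simp only [Pi.smul_apply, smul_eq_mul, RingHom.id_apply, mul_smul, smul_add]

@[simp] theorem fmd_apply (a b c d : V) (x : Fin 4 → k) :
    fmd k a b c d x = x 0 • a + x 1 • b + x 2 • c + x 3 • d := rfl

theorem fmd_inj {a b c d : V} (hli : LinearIndependent k ![a, b, c, d]) :
    Function.Injective (fmd k a b c d) := by
  rw [← LinearMap.ker_eq_bot, Submodule.eq_bot_iff]
  intro x hx
  have h := Fintype.linearIndependent_iff.mp hli x ?_
  · funext m; fin_cases m <;> simpa using h _
  · rw [Fin.sum_univ_four]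
    simpa using hx

theorem mem_pair_of_int (i j l : Fin 10) (c1 c2 : ℤ)
    (h : ∀ m, Mz l m = c1 * Mz i m + c2 * Mz j m) :
    Xv k l ∈ Submodule.span k {Xv k i, Xv k j} := by
  rw [Submodule.mem_span_pair]
  refine ⟨(c1 : k), (c2 : k), funext fun m => ?_⟩
  simp only [Pi.add_apply, Pi.smul_apply, smul_eq_mul, Xv_int]
  exact_mod_cast (congrArg (fun z : ℤ => (z : k)) (h m)).symm

theorem not_mem_pair_of_int (i j l : Fin 10) (lam : Fin 4 → ℤ)
    (hi : ∑ m, lam m * Mz i m = 0) (hj : ∑ m, lam m * Mz j m = 0)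
    (hl : ∑ m, lam m * Mz l m = 1) :
    Xv k l ∉ Submodule.span k {Xv k i, Xv k j} := by
  rw [Submodule.mem_span_pair]
  rintro ⟨α, β, hf⟩
  have key : ∀ m, α * ((Mz i m : ℤ) : k) + β * ((Mz j m : ℤ) : k) = ((Mz l m : ℤ) : k) :=
    fun m => by simpa only [Pi.add_apply, Pi.smul_apply, smul_eq_mul, Xv_int] using congrFun hf m
  have e1 : ((∑ m, lam m * Mz l m : ℤ) : k)
      = α * ((∑ m, lam m * Mz i m : ℤ) : k) + β * ((∑ m, lam m * Mz j m : ℤ) : k) := by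
    push_cast
    rw [Finset.mul_sum, Finset.mul_sum, ← Finset.sum_add_distrib]
    exact (Finset.sum_congr rfl fun m _ => by rw [← key m]; ring).symm
  rw [hi, hj, hl] at e1
  norm_num at e1

theorem span_single_ne (i j : Fin 10) (m : Fin 4) (h1 : Mz i m = 0)
    (h2 : Mz j m = 1 ∨ Mz j m = -1) :
    Submodule.span k {Xv k i} ≠ Submodule.span k {Xv k j} := by
  intro h
  have hj : Xv k j ∈ Submodule.span k {Xv k i} := h ▸ Submodule.mem_span_singleton_self _
  obtain ⟨cc, hcc⟩ := Submodule.mem_span_singleton.mp hj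
  have h3 := congrFun hcc m
  simp only [Pi.smul_apply, smul_eq_mul, Xv_int, h1] at h3
  rcases h2 with h2 | h2 <;> rw [h2] at h3 <;> norm_num at h3

theorem Xv_ne_zero (i : Fin 10) (m : Fin 4) (h : Mz i m = 1) : (Xv k i : Fin 4 → k) ≠ 0 := by
  intro hz
  have h3 := congrFun hz m
  rw [Xv_int, h] at h3
  norm_num at h3

theorem li_pair_int (i j : Fin 10) (m1 m2 : Fin 4)
    (h1 : Mz i m1 = 1 ∨ Mz i m1 = -1) (h2 : Mz j m1 = 0)
    (h3 : Mz i m2 = 0) (h4 : Mz j m2 = 1 ∨ Mz j m2 = -1) :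
    LinearIndependent k ![(Xv k i : Fin 4 → k), Xv k j] := by
  rw [LinearIndependent.pair_iff]
  intro s t hst
  have e1 := congrFun hst m1
  have e2 := congrFun hst m2
  simp only [Pi.add_apply, Pi.smul_apply, smul_eq_mul, Xv_int, h2, h3, Pi.zero_apply] at e1 e2
  constructor
  · rcases h1 with h | h <;> rw [h] at e1 <;> push_cast at e1
    · linear_combination e1
    · linear_combination -e1
  · rcases h4 with h | h <;> rw [h] at e2 <;> push_cast at e2
    · linear_combination e2
    · linear_combination -e2


theorem finrank_pair {x y : Fin 4 → k} (h : LinearIndependent k ![x, y]) :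
    Module.finrank k (Submodule.span k {x, y}) = 2 := by
  have he : ({x, y} : Set (Fin 4 → k)) = Set.range ![x, y] := by
    simp [Matrix.range_cons, Matrix.range_empty, Set.pair_comm]
  rw [he, finrank_span_eq_card h, Fintype.card_fin]

theorem map_mem_iff {f : (Fin 4 → k) →ₗ[k] V} (hf : Function.Injective f)
    {W : Submodule k (Fin 4 → k)} {x : Fin 4 → k} : f x ∈ W.map f ↔ x ∈ W := by
  constructor
  · rintro ⟨y, hy, he⟩; rwa [← hf he]
  · exact fun h => Submodule.mem_map_of_mem h

theorem map_span_pair (f : (Fin 4 → k) →ₗ[k] V) (x y : Fin 4 → k) :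
    (Submodule.span k {x, y}).map f = Submodule.span k {f x, f y} := by
  rw [Submodule.map_span, Set.image_insert_eq, Set.image_singleton]

theorem finrank_map_pair {f : (Fin 4 → k) →ₗ[k] V} (hf : Function.Injective f)
    {x y : Fin 4 → k} (h : LinearIndependent k ![x, y]) :
    Module.finrank k ((Submodule.span k {x, y}).map f) = 2 := by
  rw [← LinearEquiv.finrank_eq (Submodule.equivMapOfInjective f hf _)]
  exact finrank_pair h

theorem pt_mem_line_iff {f : (Fin 4 → k) →ₗ[k] V} (hf : Function.Injective f)
    {W : Submodule k (Fin 4 → k)} {x : Fin 4 → k} (hx : f x ≠ 0) :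
    (Projectivization.mk k (f x) hx).submodule ≤ W.map f ↔ x ∈ W := by
  rw [Projectivization.submodule_mk, Submodule.span_singleton_le_iff_mem]
  exact map_mem_iff hf

theorem pt_eq_iff {f : (Fin 4 → k) →ₗ[k] V} (hf : Function.Injective f)
    {x y : Fin 4 → k} (hx : f x ≠ 0) (hy : f y ≠ 0) (h : Projectivization.mk k (f x) hx = Projectivization.mk k (f y) hy) :
    Submodule.span k {x} = Submodule.span k {y} := by
  have h2 := congrArg Projectivization.submodule h
  rw [Projectivization.submodule_mk, Projectivization.submodule_mk] at h2
  apply Submodule.map_injective_of_injective hf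
  rwa [Submodule.map_span, Submodule.map_span, Set.image_singleton, Set.image_singleton]

theorem fmd_Xv0 (a b c d : V) : fmd k a b c d (Xv k 0) = a := by
  show ((Mz 0 0 : ℤ) : k) • a + ((Mz 0 1 : ℤ) : k) • b + ((Mz 0 2 : ℤ) : k) • c + ((Mz 0 3 : ℤ) : k) • d = a
  rw [show Mz 0 0 = 1 from rfl, show Mz 0 1 = 0 from rfl, show Mz 0 2 = 0 from rfl, show Mz 0 3 = 0 from rfl]
  push_cast
  module

theorem fmd_Xv1 (a b c d : V) : fmd k a b c d (Xv k 1) = b := by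
  show ((Mz 1 0 : ℤ) : k) • a + ((Mz 1 1 : ℤ) : k) • b + ((Mz 1 2 : ℤ) : k) • c + ((Mz 1 3 : ℤ) : k) • d = b
  rw [show Mz 1 0 = 0 from rfl, show Mz 1 1 = 1 from rfl, show Mz 1 2 = 0 from rfl, show Mz 1 3 = 0 from rfl]
  push_cast
  module

theorem fmd_Xv2 (a b c d : V) : fmd k a b c d (Xv k 2) = c := by
  show ((Mz 2 0 : ℤ) : k) • a + ((Mz 2 1 : ℤ) : k) • b + ((Mz 2 2 : ℤ) : k) • c + ((Mz 2 3 : ℤ) : k) • d = c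
  rw [show Mz 2 0 = 0 from rfl, show Mz 2 1 = 0 from rfl, show Mz 2 2 = 1 from rfl, show Mz 2 3 = 0 from rfl]
  push_cast
  module

theorem fmd_Xv3 (a b c d : V) : fmd k a b c d (Xv k 3) = d := by
  show ((Mz 3 0 : ℤ) : k) • a + ((Mz 3 1 : ℤ) : k) • b + ((Mz 3 2 : ℤ) : k) • c + ((Mz 3 3 : ℤ) : k) • d = d
  rw [show Mz 3 0 = 0 from rfl, show Mz 3 1 = 0 from rfl, show Mz 3 2 = 0 from rfl, show Mz 3 3 = 1 from rfl]
  push_cast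
  module

theorem fmd_Xv4 (a b c d : V) : fmd k a b c d (Xv k 4) = b - a := by
  show ((Mz 4 0 : ℤ) : k) • a + ((Mz 4 1 : ℤ) : k) • b + ((Mz 4 2 : ℤ) : k) • c + ((Mz 4 3 : ℤ) : k) • d = b - a
  rw [show Mz 4 0 = -1 from rfl, show Mz 4 1 = 1 from rfl, show Mz 4 2 = 0 from rfl, show Mz 4 3 = 0 from rfl]
  push_cast
  module

theorem fmd_Xv5 (a b c d : V) : fmd k a b c d (Xv k 5) = c - a := by
  show ((Mz 5 0 : ℤ) : k) • a + ((Mz 5 1 : ℤ) : k) • b + ((Mz 5 2 : ℤ) : k) • c + ((Mz 5 3 : ℤ) : k) • d = c - a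
  rw [show Mz 5 0 = -1 from rfl, show Mz 5 1 = 0 from rfl, show Mz 5 2 = 1 from rfl, show Mz 5 3 = 0 from rfl]
  push_cast
  module

theorem fmd_Xv6 (a b c d : V) : fmd k a b c d (Xv k 6) = d - a := by
  show ((Mz 6 0 : ℤ) : k) • a + ((Mz 6 1 : ℤ) : k) • b + ((Mz 6 2 : ℤ) : k) • c + ((Mz 6 3 : ℤ) : k) • d = d - a
  rw [show Mz 6 0 = -1 from rfl, show Mz 6 1 = 0 from rfl, show Mz 6 2 = 0 from rfl, show Mz 6 3 = 1 from rfl]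
  push_cast
  module

theorem fmd_Xv7 (a b c d : V) : fmd k a b c d (Xv k 7) = c - b := by
  show ((Mz 7 0 : ℤ) : k) • a + ((Mz 7 1 : ℤ) : k) • b + ((Mz 7 2 : ℤ) : k) • c + ((Mz 7 3 : ℤ) : k) • d = c - b
  rw [show Mz 7 0 = 0 from rfl, show Mz 7 1 = -1 from rfl, show Mz 7 2 = 1 from rfl, show Mz 7 3 = 0 from rfl]
  push_cast
  module

theorem fmd_Xv8 (a b c d : V) : fmd k a b c d (Xv k 8) = d - b := by
  show ((Mz 8 0 : ℤ) : k) • a + ((Mz 8 1 : ℤ) : k) • b + ((Mz 8 2 : ℤ) : k) • c + ((Mz 8 3 : ℤ) : k) • d = d - b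
  rw [show Mz 8 0 = 0 from rfl, show Mz 8 1 = -1 from rfl, show Mz 8 2 = 0 from rfl, show Mz 8 3 = 1 from rfl]
  push_cast
  module

theorem fmd_Xv9 (a b c d : V) : fmd k a b c d (Xv k 9) = c - d := by
  show ((Mz 9 0 : ℤ) : k) • a + ((Mz 9 1 : ℤ) : k) • b + ((Mz 9 2 : ℤ) : k) • c + ((Mz 9 3 : ℤ) : k) • d = c - d
  rw [show Mz 9 0 = 0 from rfl, show Mz 9 1 = 0 from rfl, show Mz 9 2 = 1 from rfl, show Mz 9 3 = -1 from rfl]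
  push_cast
  module

def oc : Fin 10 → Fin 4 := ![0,1,2,3,1,2,3,2,3,2]

theorem hoc : ∀ i : Fin 10, Mz i (oc i) = 1 := by decide

theorem fmd_Xv_nz (a b c d : V) (hli : LinearIndependent k ![a, b, c, d]) (i : Fin 10) :
    fmd k a b c d (Xv k i) ≠ 0 := by
  intro h
  have h0 : Xv k i = 0 := fmd_inj hli (by rw [h, map_zero])
  exact Xv_ne_zero i (oc i) (hoc i) h0

def ptd (a b c d : V) (hli : LinearIndependent k ![a, b, c, d]) :
    Fin 10 → Projectivization k V :=
  fun i => Projectivization.mk k (fmd k a b c d (Xv k i)) (fmd_Xv_nz a b c d hli i)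

def Wv (k : Type*) [Field k] : Fin 10 → Submodule k (Fin 4 → k) :=
  fun t => Submodule.span k {Xv k (g1 t), Xv k (g2 t)}

def Lnd (a b c d : V) : Fin 10 → Set (Projectivization k V) :=
  fun t => {p | p.submodule ≤ (Wv k t).map (fmd k a b c d)}

theorem ptd_submodule (a b c d : V) (hli : LinearIndependent k ![a, b, c, d]) (i : Fin 10) :
    (ptd a b c d hli i).submodule = Submodule.span k {fmd k a b c d (Xv k i)} :=
  Projectivization.submodule_mk _ _

theorem mem_Lnd_iff (a b c d : V) (hli : LinearIndependent k ![a, b, c, d]) (i t : Fin 10) :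
    ptd a b c d hli i ∈ Lnd a b c d t ↔ Xv k i ∈ Wv k t :=
  pt_mem_line_iff (fmd_inj hli) (fmd_Xv_nz a b c d hli i)

theorem key_inc (a b c d : V) (hli : LinearIndependent k ![a, b, c, d]) :
    ∀ t i : Fin 10, (ptd a b c d hli i ∈ Lnd a b c d t ↔ (i = g1 t ∨ i = g2 t ∨ i = g3 t)) := by
  intro t i
  refine (mem_Lnd_iff a b c d hli i t).trans ?_
  fin_cases t <;> fin_cases i
  exacts [
      iff_of_true (Submodule.subset_span (Set.mem_insert _ _)) (by decide),
      iff_of_true (Submodule.subset_span (Set.mem_insert_of_mem _ rfl)) (by decide),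
      iff_of_false (not_mem_pair_of_int 0 1 2 ![0,0,1,-2] (by decide) (by decide) (by decide)) (by decide),
      iff_of_false (not_mem_pair_of_int 0 1 3 ![0,0,-2,1] (by decide) (by decide) (by decide)) (by decide),
      iff_of_true (mem_pair_of_int 0 1 4 (-1) (1) (by decide)) (by decide),
      iff_of_false (not_mem_pair_of_int 0 1 5 ![0,0,1,-2] (by decide) (by decide) (by decide)) (by decide),
      iff_of_false (not_mem_pair_of_int 0 1 6 ![0,0,-2,1] (by decide) (by decide) (by decide)) (by decide),
      iff_of_false (not_mem_pair_of_int 0 1 7 ![0,0,1,-2] (by decide) (by decide) (by decide)) (by decide),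
      iff_of_false (not_mem_pair_of_int 0 1 8 ![0,0,-2,1] (by decide) (by decide) (by decide)) (by decide),
      iff_of_false (not_mem_pair_of_int 0 1 9 ![0,0,-1,-2] (by decide) (by decide) (by decide)) (by decide),
      iff_of_true (Submodule.subset_span (Set.mem_insert _ _)) (by decide),
      iff_of_false (not_mem_pair_of_int 0 2 1 ![0,1,0,-2] (by decide) (by decide) (by decide)) (by decide),
      iff_of_true (Submodule.subset_span (Set.mem_insert_of_mem _ rfl)) (by decide),
      iff_of_false (not_mem_pair_of_int 0 2 3 ![0,-2,0,1] (by decide) (by decide) (by decide)) (by decide),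
      iff_of_false (not_mem_pair_of_int 0 2 4 ![0,1,0,-2] (by decide) (by decide) (by decide)) (by decide),
      iff_of_true (mem_pair_of_int 0 2 5 (-1) (1) (by decide)) (by decide),
      iff_of_false (not_mem_pair_of_int 0 2 6 ![0,-2,0,1] (by decide) (by decide) (by decide)) (by decide),
      iff_of_false (not_mem_pair_of_int 0 2 7 ![0,-1,0,-2] (by decide) (by decide) (by decide)) (by decide),
      iff_of_false (not_mem_pair_of_int 0 2 8 ![0,-2,0,-1] (by decide) (by decide) (by decide)) (by decide),
      iff_of_false (not_mem_pair_of_int 0 2 9 ![0,-2,0,-1] (by decide) (by decide) (by decide)) (by decide),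
      iff_of_true (Submodule.subset_span (Set.mem_insert _ _)) (by decide),
      iff_of_false (not_mem_pair_of_int 0 3 1 ![0,1,-2,0] (by decide) (by decide) (by decide)) (by decide),
      iff_of_false (not_mem_pair_of_int 0 3 2 ![0,-2,1,0] (by decide) (by decide) (by decide)) (by decide),
      iff_of_true (Submodule.subset_span (Set.mem_insert_of_mem _ rfl)) (by decide),
      iff_of_false (not_mem_pair_of_int 0 3 4 ![0,1,-2,0] (by decide) (by decide) (by decide)) (by decide),
      iff_of_false (not_mem_pair_of_int 0 3 5 ![0,-2,1,0] (by decide) (by decide) (by decide)) (by decide),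
      iff_of_true (mem_pair_of_int 0 3 6 (-1) (1) (by decide)) (by decide),
      iff_of_false (not_mem_pair_of_int 0 3 7 ![0,-2,-1,0] (by decide) (by decide) (by decide)) (by decide),
      iff_of_false (not_mem_pair_of_int 0 3 8 ![0,-1,-2,0] (by decide) (by decide) (by decide)) (by decide),
      iff_of_false (not_mem_pair_of_int 0 3 9 ![0,-2,1,0] (by decide) (by decide) (by decide)) (by decide),
      iff_of_false (not_mem_pair_of_int 1 2 0 ![1,0,0,-2] (by decide) (by decide) (by decide)) (by decide),
      iff_of_true (Submodule.subset_span (Set.mem_insert _ _)) (by decide),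
      iff_of_true (Submodule.subset_span (Set.mem_insert_of_mem _ rfl)) (by decide),
      iff_of_false (not_mem_pair_of_int 1 2 3 ![-2,0,0,1] (by decide) (by decide) (by decide)) (by decide),
      iff_of_false (not_mem_pair_of_int 1 2 4 ![-1,0,0,-2] (by decide) (by decide) (by decide)) (by decide),
      iff_of_false (not_mem_pair_of_int 1 2 5 ![-1,0,0,-2] (by decide) (by decide) (by decide)) (by decide),
      iff_of_false (not_mem_pair_of_int 1 2 6 ![-2,0,0,-1] (by decide) (by decide) (by decide)) (by decide),
      iff_of_true (mem_pair_of_int 1 2 7 (-1) (1) (by decide)) (by decide),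
      iff_of_false (not_mem_pair_of_int 1 2 8 ![-2,0,0,1] (by decide) (by decide) (by decide)) (by decide),
      iff_of_false (not_mem_pair_of_int 1 2 9 ![-2,0,0,-1] (by decide) (by decide) (by decide)) (by decide),
      iff_of_false (not_mem_pair_of_int 1 3 0 ![1,0,-2,0] (by decide) (by decide) (by decide)) (by decide),
      iff_of_true (Submodule.subset_span (Set.mem_insert _ _)) (by decide),
      iff_of_false (not_mem_pair_of_int 1 3 2 ![-2,0,1,0] (by decide) (by decide) (by decide)) (by decide),
      iff_of_true (Submodule.subset_span (Set.mem_insert_of_mem _ rfl)) (by decide),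
      iff_of_false (not_mem_pair_of_int 1 3 4 ![-1,0,-2,0] (by decide) (by decide) (by decide)) (by decide),
      iff_of_false (not_mem_pair_of_int 1 3 5 ![-2,0,-1,0] (by decide) (by decide) (by decide)) (by decide),
      iff_of_false (not_mem_pair_of_int 1 3 6 ![-1,0,-2,0] (by decide) (by decide) (by decide)) (by decide),
      iff_of_false (not_mem_pair_of_int 1 3 7 ![-2,0,1,0] (by decide) (by decide) (by decide)) (by decide),
      iff_of_true (mem_pair_of_int 1 3 8 (-1) (1) (by decide)) (by decide),
      iff_of_false (not_mem_pair_of_int 1 3 9 ![-2,0,1,0] (by decide) (by decide) (by decide)) (by decide),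
      iff_of_false (not_mem_pair_of_int 2 3 0 ![1,-2,0,0] (by decide) (by decide) (by decide)) (by decide),
      iff_of_false (not_mem_pair_of_int 2 3 1 ![-2,1,0,0] (by decide) (by decide) (by decide)) (by decide),
      iff_of_true (Submodule.subset_span (Set.mem_insert _ _)) (by decide),
      iff_of_true (Submodule.subset_span (Set.mem_insert_of_mem _ rfl)) (by decide),
      iff_of_false (not_mem_pair_of_int 2 3 4 ![-2,-1,0,0] (by decide) (by decide) (by decide)) (by decide),
      iff_of_false (not_mem_pair_of_int 2 3 5 ![-1,-2,0,0] (by decide) (by decide) (by decide)) (by decide),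
      iff_of_false (not_mem_pair_of_int 2 3 6 ![-1,-2,0,0] (by decide) (by decide) (by decide)) (by decide),
      iff_of_false (not_mem_pair_of_int 2 3 7 ![-2,-1,0,0] (by decide) (by decide) (by decide)) (by decide),
      iff_of_false (not_mem_pair_of_int 2 3 8 ![-2,-1,0,0] (by decide) (by decide) (by decide)) (by decide),
      iff_of_true (mem_pair_of_int 2 3 9 (1) (-1) (by decide)) (by decide),
      iff_of_false (not_mem_pair_of_int 4 5 0 ![1,1,1,-2] (by decide) (by decide) (by decide)) (by decide),
      iff_of_false (not_mem_pair_of_int 4 5 1 ![1,1,1,-2] (by decide) (by decide) (by decide)) (by decide),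
      iff_of_false (not_mem_pair_of_int 4 5 2 ![1,1,1,-2] (by decide) (by decide) (by decide)) (by decide),
      iff_of_false (not_mem_pair_of_int 4 5 3 ![-2,-2,-2,1] (by decide) (by decide) (by decide)) (by decide),
      iff_of_true (Submodule.subset_span (Set.mem_insert _ _)) (by decide),
      iff_of_true (Submodule.subset_span (Set.mem_insert_of_mem _ rfl)) (by decide),
      iff_of_false (not_mem_pair_of_int 4 5 6 ![-2,-2,-2,-1] (by decide) (by decide) (by decide)) (by decide),
      iff_of_true (mem_pair_of_int 4 5 7 (-1) (1) (by decide)) (by decide),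
      iff_of_false (not_mem_pair_of_int 4 5 8 ![-2,-2,-2,-1] (by decide) (by decide) (by decide)) (by decide),
      iff_of_false (not_mem_pair_of_int 4 5 9 ![-1,-1,-1,-2] (by decide) (by decide) (by decide)) (by decide),
      iff_of_false (not_mem_pair_of_int 4 6 0 ![1,1,-2,1] (by decide) (by decide) (by decide)) (by decide),
      iff_of_false (not_mem_pair_of_int 4 6 1 ![1,1,-2,1] (by decide) (by decide) (by decide)) (by decide),
      iff_of_false (not_mem_pair_of_int 4 6 2 ![-2,-2,1,-2] (by decide) (by decide) (by decide)) (by decide),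
      iff_of_false (not_mem_pair_of_int 4 6 3 ![1,1,-2,1] (by decide) (by decide) (by decide)) (by decide),
      iff_of_true (Submodule.subset_span (Set.mem_insert _ _)) (by decide),
      iff_of_false (not_mem_pair_of_int 4 6 5 ![-2,-2,-1,-2] (by decide) (by decide) (by decide)) (by decide),
      iff_of_true (Submodule.subset_span (Set.mem_insert_of_mem _ rfl)) (by decide),
      iff_of_false (not_mem_pair_of_int 4 6 7 ![-2,-2,-1,-2] (by decide) (by decide) (by decide)) (by decide),
      iff_of_true (mem_pair_of_int 4 6 8 (-1) (1) (by decide)) (by decide),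
      iff_of_false (not_mem_pair_of_int 4 6 9 ![-2,-2,-1,-2] (by decide) (by decide) (by decide)) (by decide),
      iff_of_false (not_mem_pair_of_int 5 6 0 ![1,-2,1,1] (by decide) (by decide) (by decide)) (by decide),
      iff_of_false (not_mem_pair_of_int 5 6 1 ![-2,1,-2,-2] (by decide) (by decide) (by decide)) (by decide),
      iff_of_false (not_mem_pair_of_int 5 6 2 ![1,-2,1,1] (by decide) (by decide) (by decide)) (by decide),
      iff_of_false (not_mem_pair_of_int 5 6 3 ![1,-2,1,1] (by decide) (by decide) (by decide)) (by decide),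
      iff_of_false (not_mem_pair_of_int 5 6 4 ![-2,-1,-2,-2] (by decide) (by decide) (by decide)) (by decide),
      iff_of_true (Submodule.subset_span (Set.mem_insert _ _)) (by decide),
      iff_of_true (Submodule.subset_span (Set.mem_insert_of_mem _ rfl)) (by decide),
      iff_of_false (not_mem_pair_of_int 5 6 7 ![-1,-2,-1,-1] (by decide) (by decide) (by decide)) (by decide),
      iff_of_false (not_mem_pair_of_int 5 6 8 ![-1,-2,-1,-1] (by decide) (by decide) (by decide)) (by decide),
      iff_of_true (mem_pair_of_int 5 6 9 (1) (-1) (by decide)) (by decide),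
      iff_of_false (not_mem_pair_of_int 7 8 0 ![1,-2,-2,-2] (by decide) (by decide) (by decide)) (by decide),
      iff_of_false (not_mem_pair_of_int 7 8 1 ![-2,1,1,1] (by decide) (by decide) (by decide)) (by decide),
      iff_of_false (not_mem_pair_of_int 7 8 2 ![-2,1,1,1] (by decide) (by decide) (by decide)) (by decide),
      iff_of_false (not_mem_pair_of_int 7 8 3 ![-2,1,1,1] (by decide) (by decide) (by decide)) (by decide),
      iff_of_false (not_mem_pair_of_int 7 8 4 ![-2,-1,-1,-1] (by decide) (by decide) (by decide)) (by decide),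
      iff_of_false (not_mem_pair_of_int 7 8 5 ![-2,-1,-1,-1] (by decide) (by decide) (by decide)) (by decide),
      iff_of_false (not_mem_pair_of_int 7 8 6 ![-2,-1,-1,-1] (by decide) (by decide) (by decide)) (by decide),
      iff_of_true (Submodule.subset_span (Set.mem_insert _ _)) (by decide),
      iff_of_true (Submodule.subset_span (Set.mem_insert_of_mem _ rfl)) (by decide),
      iff_of_true (mem_pair_of_int 7 8 9 (1) (-1) (by decide)) (by decide)]

theorem ptd_inj (a b c d : V) (hli : LinearIndependent k ![a, b, c, d]) :
    Function.Injective (ptd a b c d hli) := by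
  intro i j h
  by_contra hne
  have hsp := pt_eq_iff (fmd_inj hli) (fmd_Xv_nz a b c d hli i) (fmd_Xv_nz a b c d hli j) h
  revert hsp
  fin_cases i <;> fin_cases j
  exacts [
      fun _ => hne rfl,
      span_single_ne 0 1 1 rfl (Or.inl rfl),
      span_single_ne 0 2 2 rfl (Or.inl rfl),
      span_single_ne 0 3 3 rfl (Or.inl rfl),
      span_single_ne 0 4 1 rfl (Or.inl rfl),
      span_single_ne 0 5 2 rfl (Or.inl rfl),
      span_single_ne 0 6 3 rfl (Or.inl rfl),
      span_single_ne 0 7 1 rfl (Or.inr rfl),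
      span_single_ne 0 8 1 rfl (Or.inr rfl),
      span_single_ne 0 9 2 rfl (Or.inl rfl),
      span_single_ne 1 0 0 rfl (Or.inl rfl),
      fun _ => hne rfl,
      span_single_ne 1 2 2 rfl (Or.inl rfl),
      span_single_ne 1 3 3 rfl (Or.inl rfl),
      span_single_ne 1 4 0 rfl (Or.inr rfl),
      span_single_ne 1 5 0 rfl (Or.inr rfl),
      span_single_ne 1 6 0 rfl (Or.inr rfl),
      span_single_ne 1 7 2 rfl (Or.inl rfl),
      span_single_ne 1 8 3 rfl (Or.inl rfl),
      span_single_ne 1 9 2 rfl (Or.inl rfl),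
      span_single_ne 2 0 0 rfl (Or.inl rfl),
      span_single_ne 2 1 1 rfl (Or.inl rfl),
      fun _ => hne rfl,
      span_single_ne 2 3 3 rfl (Or.inl rfl),
      span_single_ne 2 4 0 rfl (Or.inr rfl),
      span_single_ne 2 5 0 rfl (Or.inr rfl),
      span_single_ne 2 6 0 rfl (Or.inr rfl),
      span_single_ne 2 7 1 rfl (Or.inr rfl),
      span_single_ne 2 8 1 rfl (Or.inr rfl),
      span_single_ne 2 9 3 rfl (Or.inr rfl),
      span_single_ne 3 0 0 rfl (Or.inl rfl),
      span_single_ne 3 1 1 rfl (Or.inl rfl),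
      span_single_ne 3 2 2 rfl (Or.inl rfl),
      fun _ => hne rfl,
      span_single_ne 3 4 0 rfl (Or.inr rfl),
      span_single_ne 3 5 0 rfl (Or.inr rfl),
      span_single_ne 3 6 0 rfl (Or.inr rfl),
      span_single_ne 3 7 1 rfl (Or.inr rfl),
      span_single_ne 3 8 1 rfl (Or.inr rfl),
      span_single_ne 3 9 2 rfl (Or.inl rfl),
      fun hsp => span_single_ne 0 4 1 rfl (Or.inl rfl) hsp.symm,
      fun hsp => span_single_ne 1 4 0 rfl (Or.inr rfl) hsp.symm,
      span_single_ne 4 2 2 rfl (Or.inl rfl),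
      span_single_ne 4 3 3 rfl (Or.inl rfl),
      fun _ => hne rfl,
      span_single_ne 4 5 2 rfl (Or.inl rfl),
      span_single_ne 4 6 3 rfl (Or.inl rfl),
      span_single_ne 4 7 2 rfl (Or.inl rfl),
      span_single_ne 4 8 3 rfl (Or.inl rfl),
      span_single_ne 4 9 2 rfl (Or.inl rfl),
      fun hsp => span_single_ne 0 5 2 rfl (Or.inl rfl) hsp.symm,
      span_single_ne 5 1 1 rfl (Or.inl rfl),
      fun hsp => span_single_ne 2 5 0 rfl (Or.inr rfl) hsp.symm,
      span_single_ne 5 3 3 rfl (Or.inl rfl),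
      span_single_ne 5 4 1 rfl (Or.inl rfl),
      fun _ => hne rfl,
      span_single_ne 5 6 3 rfl (Or.inl rfl),
      span_single_ne 5 7 1 rfl (Or.inr rfl),
      span_single_ne 5 8 1 rfl (Or.inr rfl),
      span_single_ne 5 9 3 rfl (Or.inr rfl),
      fun hsp => span_single_ne 0 6 3 rfl (Or.inl rfl) hsp.symm,
      span_single_ne 6 1 1 rfl (Or.inl rfl),
      span_single_ne 6 2 2 rfl (Or.inl rfl),
      fun hsp => span_single_ne 3 6 0 rfl (Or.inr rfl) hsp.symm,
      span_single_ne 6 4 1 rfl (Or.inl rfl),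
      span_single_ne 6 5 2 rfl (Or.inl rfl),
      fun _ => hne rfl,
      span_single_ne 6 7 1 rfl (Or.inr rfl),
      span_single_ne 6 8 1 rfl (Or.inr rfl),
      span_single_ne 6 9 2 rfl (Or.inl rfl),
      span_single_ne 7 0 0 rfl (Or.inl rfl),
      fun hsp => span_single_ne 1 7 2 rfl (Or.inl rfl) hsp.symm,
      fun hsp => span_single_ne 2 7 1 rfl (Or.inr rfl) hsp.symm,
      span_single_ne 7 3 3 rfl (Or.inl rfl),
      span_single_ne 7 4 0 rfl (Or.inr rfl),
      span_single_ne 7 5 0 rfl (Or.inr rfl),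
      span_single_ne 7 6 0 rfl (Or.inr rfl),
      fun _ => hne rfl,
      span_single_ne 7 8 3 rfl (Or.inl rfl),
      span_single_ne 7 9 3 rfl (Or.inr rfl),
      span_single_ne 8 0 0 rfl (Or.inl rfl),
      fun hsp => span_single_ne 1 8 3 rfl (Or.inl rfl) hsp.symm,
      span_single_ne 8 2 2 rfl (Or.inl rfl),
      fun hsp => span_single_ne 3 8 1 rfl (Or.inr rfl) hsp.symm,
      span_single_ne 8 4 0 rfl (Or.inr rfl),
      span_single_ne 8 5 0 rfl (Or.inr rfl),
      span_single_ne 8 6 0 rfl (Or.inr rfl),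
      span_single_ne 8 7 2 rfl (Or.inl rfl),
      fun _ => hne rfl,
      span_single_ne 8 9 2 rfl (Or.inl rfl),
      span_single_ne 9 0 0 rfl (Or.inl rfl),
      span_single_ne 9 1 1 rfl (Or.inl rfl),
      fun hsp => span_single_ne 2 9 3 rfl (Or.inr rfl) hsp.symm,
      fun hsp => span_single_ne 3 9 2 rfl (Or.inl rfl) hsp.symm,
      span_single_ne 9 4 0 rfl (Or.inr rfl),
      span_single_ne 9 5 0 rfl (Or.inr rfl),
      span_single_ne 9 6 0 rfl (Or.inr rfl),
      span_single_ne 9 7 1 rfl (Or.inr rfl),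
      span_single_ne 9 8 1 rfl (Or.inr rfl),
      fun _ => hne rfl]

theorem line_eq0 (a b c d : V) :
    diffSpan k ((![0, a, b, c, d]) '' ↑(({0, 1, 2} : Finset (Fin 5)) : Finset (Fin 5))) = (Wv k 0).map (fmd k a b c d) := by
  have himg : (![0, a, b, c, d]) '' ↑(({0, 1, 2} : Finset (Fin 5))) = {(0 : V), a, b} := by
    rw [show ((({0, 1, 2} : Finset (Fin 5)) : Set (Fin 5))) = {0, 1, 2} from by simp]
    rw [Set.image_insert_eq, Set.image_insert_eq, Set.image_singleton]
    rfl
  rw [himg, dsp_triple]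
  rw [sub_zero, sub_zero]
  rw [show Wv k 0 = Submodule.span k {Xv k 0, Xv k 1} from rfl, map_span_pair, fmd_Xv0 a b c d, fmd_Xv1 a b c d]

theorem line_eq1 (a b c d : V) :
    diffSpan k ((![0, a, b, c, d]) '' ↑(({0, 1, 3} : Finset (Fin 5)) : Finset (Fin 5))) = (Wv k 1).map (fmd k a b c d) := by
  have himg : (![0, a, b, c, d]) '' ↑(({0, 1, 3} : Finset (Fin 5))) = {(0 : V), a, c} := by
    rw [show ((({0, 1, 3} : Finset (Fin 5)) : Set (Fin 5))) = {0, 1, 3} from by simp]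
    rw [Set.image_insert_eq, Set.image_insert_eq, Set.image_singleton]
    rfl
  rw [himg, dsp_triple]
  rw [sub_zero, sub_zero]
  rw [show Wv k 1 = Submodule.span k {Xv k 0, Xv k 2} from rfl, map_span_pair, fmd_Xv0 a b c d, fmd_Xv2 a b c d]

theorem line_eq2 (a b c d : V) :
    diffSpan k ((![0, a, b, c, d]) '' ↑(({0, 1, 4} : Finset (Fin 5)) : Finset (Fin 5))) = (Wv k 2).map (fmd k a b c d) := by
  have himg : (![0, a, b, c, d]) '' ↑(({0, 1, 4} : Finset (Fin 5))) = {(0 : V), a, d} := by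
    rw [show ((({0, 1, 4} : Finset (Fin 5)) : Set (Fin 5))) = {0, 1, 4} from by simp]
    rw [Set.image_insert_eq, Set.image_insert_eq, Set.image_singleton]
    rfl
  rw [himg, dsp_triple]
  rw [sub_zero, sub_zero]
  rw [show Wv k 2 = Submodule.span k {Xv k 0, Xv k 3} from rfl, map_span_pair, fmd_Xv0 a b c d, fmd_Xv3 a b c d]

theorem line_eq3 (a b c d : V) :
    diffSpan k ((![0, a, b, c, d]) '' ↑(({0, 2, 3} : Finset (Fin 5)) : Finset (Fin 5))) = (Wv k 3).map (fmd k a b c d) := by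
  have himg : (![0, a, b, c, d]) '' ↑(({0, 2, 3} : Finset (Fin 5))) = {(0 : V), b, c} := by
    rw [show ((({0, 2, 3} : Finset (Fin 5)) : Set (Fin 5))) = {0, 2, 3} from by simp]
    rw [Set.image_insert_eq, Set.image_insert_eq, Set.image_singleton]
    rfl
  rw [himg, dsp_triple]
  rw [sub_zero, sub_zero]
  rw [show Wv k 3 = Submodule.span k {Xv k 1, Xv k 2} from rfl, map_span_pair, fmd_Xv1 a b c d, fmd_Xv2 a b c d]

theorem line_eq4 (a b c d : V) :
    diffSpan k ((![0, a, b, c, d]) '' ↑(({0, 2, 4} : Finset (Fin 5)) : Finset (Fin 5))) = (Wv k 4).map (fmd k a b c d) := by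
  have himg : (![0, a, b, c, d]) '' ↑(({0, 2, 4} : Finset (Fin 5))) = {(0 : V), b, d} := by
    rw [show ((({0, 2, 4} : Finset (Fin 5)) : Set (Fin 5))) = {0, 2, 4} from by simp]
    rw [Set.image_insert_eq, Set.image_insert_eq, Set.image_singleton]
    rfl
  rw [himg, dsp_triple]
  rw [sub_zero, sub_zero]
  rw [show Wv k 4 = Submodule.span k {Xv k 1, Xv k 3} from rfl, map_span_pair, fmd_Xv1 a b c d, fmd_Xv3 a b c d]

theorem line_eq5 (a b c d : V) :
    diffSpan k ((![0, a, b, c, d]) '' ↑(({0, 3, 4} : Finset (Fin 5)) : Finset (Fin 5))) = (Wv k 5).map (fmd k a b c d) := by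
  have himg : (![0, a, b, c, d]) '' ↑(({0, 3, 4} : Finset (Fin 5))) = {(0 : V), c, d} := by
    rw [show ((({0, 3, 4} : Finset (Fin 5)) : Set (Fin 5))) = {0, 3, 4} from by simp]
    rw [Set.image_insert_eq, Set.image_insert_eq, Set.image_singleton]
    rfl
  rw [himg, dsp_triple]
  rw [sub_zero, sub_zero]
  rw [show Wv k 5 = Submodule.span k {Xv k 2, Xv k 3} from rfl, map_span_pair, fmd_Xv2 a b c d, fmd_Xv3 a b c d]

theorem line_eq6 (a b c d : V) :
    diffSpan k ((![0, a, b, c, d]) '' ↑(({1, 2, 3} : Finset (Fin 5)) : Finset (Fin 5))) = (Wv k 6).map (fmd k a b c d) := by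
  have himg : (![0, a, b, c, d]) '' ↑(({1, 2, 3} : Finset (Fin 5))) = {a, b, c} := by
    rw [show ((({1, 2, 3} : Finset (Fin 5)) : Set (Fin 5))) = {1, 2, 3} from by simp]
    rw [Set.image_insert_eq, Set.image_insert_eq, Set.image_singleton]
    rfl
  rw [himg, dsp_triple]
  rw [show Wv k 6 = Submodule.span k {Xv k 4, Xv k 5} from rfl, map_span_pair, fmd_Xv4 a b c d, fmd_Xv5 a b c d]

theorem line_eq7 (a b c d : V) :
    diffSpan k ((![0, a, b, c, d]) '' ↑(({1, 2, 4} : Finset (Fin 5)) : Finset (Fin 5))) = (Wv k 7).map (fmd k a b c d) := by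
  have himg : (![0, a, b, c, d]) '' ↑(({1, 2, 4} : Finset (Fin 5))) = {a, b, d} := by
    rw [show ((({1, 2, 4} : Finset (Fin 5)) : Set (Fin 5))) = {1, 2, 4} from by simp]
    rw [Set.image_insert_eq, Set.image_insert_eq, Set.image_singleton]
    rfl
  rw [himg, dsp_triple]
  rw [show Wv k 7 = Submodule.span k {Xv k 4, Xv k 6} from rfl, map_span_pair, fmd_Xv4 a b c d, fmd_Xv6 a b c d]

theorem line_eq8 (a b c d : V) :
    diffSpan k ((![0, a, b, c, d]) '' ↑(({1, 3, 4} : Finset (Fin 5)) : Finset (Fin 5))) = (Wv k 8).map (fmd k a b c d) := by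
  have himg : (![0, a, b, c, d]) '' ↑(({1, 3, 4} : Finset (Fin 5))) = {a, c, d} := by
    rw [show ((({1, 3, 4} : Finset (Fin 5)) : Set (Fin 5))) = {1, 3, 4} from by simp]
    rw [Set.image_insert_eq, Set.image_insert_eq, Set.image_singleton]
    rfl
  rw [himg, dsp_triple]
  rw [show Wv k 8 = Submodule.span k {Xv k 5, Xv k 6} from rfl, map_span_pair, fmd_Xv5 a b c d, fmd_Xv6 a b c d]

theorem line_eq9 (a b c d : V) :
    diffSpan k ((![0, a, b, c, d]) '' ↑(({2, 3, 4} : Finset (Fin 5)) : Finset (Fin 5))) = (Wv k 9).map (fmd k a b c d) := by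
  have himg : (![0, a, b, c, d]) '' ↑(({2, 3, 4} : Finset (Fin 5))) = {b, c, d} := by
    rw [show ((({2, 3, 4} : Finset (Fin 5)) : Set (Fin 5))) = {2, 3, 4} from by simp]
    rw [Set.image_insert_eq, Set.image_insert_eq, Set.image_singleton]
    rfl
  rw [himg, dsp_triple]
  rw [show Wv k 9 = Submodule.span k {Xv k 7, Xv k 8} from rfl, map_span_pair, fmd_Xv7 a b c d, fmd_Xv8 a b c d]

theorem Wv_li : ∀ t : Fin 10, LinearIndependent k ![(Xv k (g1 t) : Fin 4 → k), Xv k (g2 t)] := by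
  intro t; fin_cases t
  exacts [
      li_pair_int 0 1 0 1 (Or.inl rfl) rfl rfl (Or.inl rfl),
      li_pair_int 0 2 0 2 (Or.inl rfl) rfl rfl (Or.inl rfl),
      li_pair_int 0 3 0 3 (Or.inl rfl) rfl rfl (Or.inl rfl),
      li_pair_int 1 2 1 2 (Or.inl rfl) rfl rfl (Or.inl rfl),
      li_pair_int 1 3 1 3 (Or.inl rfl) rfl rfl (Or.inl rfl),
      li_pair_int 2 3 2 3 (Or.inl rfl) rfl rfl (Or.inl rfl),
      li_pair_int 4 5 1 2 (Or.inl rfl) rfl rfl (Or.inl rfl),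
      li_pair_int 4 6 1 3 (Or.inl rfl) rfl rfl (Or.inl rfl),
      li_pair_int 5 6 2 3 (Or.inl rfl) rfl rfl (Or.inl rfl),
      li_pair_int 7 8 2 3 (Or.inl rfl) rfl rfl (Or.inl rfl)]

def wt : Fin 10 → Fin 10 → Fin 10 :=
  ![![0,1,1,0,0,0,0,0,0,0],
    ![2,0,2,0,0,0,0,0,0,0],
    ![3,3,0,0,0,0,0,0,0,0],
    ![2,1,1,0,2,1,1,1,1,1],
    ![3,1,1,3,0,1,1,1,1,1],
    ![2,3,2,3,2,0,2,2,2,2],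
    ![5,4,4,4,4,4,0,5,4,4],
    ![6,4,4,4,4,4,6,0,4,4],
    ![5,6,5,5,5,5,6,5,0,5],
    ![7,7,7,8,7,7,8,7,7,0]]

theorem wt_spec : ∀ t t' : Fin 10, t ≠ t' →
    ((wt t t' = g1 t ∨ wt t t' = g2 t ∨ wt t t' = g3 t) ∧
      ¬(wt t t' = g1 t' ∨ wt t t' = g2 t' ∨ wt t t' = g3 t')) := by decide

theorem Lnd_inj (a b c d : V) (hli : LinearIndependent k ![a, b, c, d]) :
    Function.Injective (Lnd a b c d (k := k)) := by
  intro t t' h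
  by_contra hne
  obtain ⟨h1, h2⟩ := wt_spec t t' hne
  have m1 := (key_inc a b c d hli t (wt t t')).mpr h1
  rw [h] at m1
  exact h2 ((key_inc a b c d hli t' (wt t t')).mp m1)

def l1 : Fin 10 → Fin 10 := ![0,0,1,2,0,1,2,3,4,5]
def l2 : Fin 10 → Fin 10 := ![1,3,3,4,6,6,7,6,7,8]
def l3 : Fin 10 → Fin 10 := ![2,4,5,5,7,8,8,9,9,9]

theorem dual_spec : ∀ i t : Fin 10,
    ((i = g1 t ∨ i = g2 t ∨ i = g3 t) ↔ (t = l1 i ∨ t = l2 i ∨ t = l3 i)) := by decide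

theorem dual_ne : ∀ i : Fin 10, l1 i ≠ l2 i ∧ l1 i ≠ l3 i ∧ l2 i ≠ l3 i := by decide

theorem g_ne : ∀ t : Fin 10, g1 t ≠ g2 t ∧ g1 t ≠ g3 t ∧ g2 t ≠ g3 t := by decide

theorem subsets_card3 : ∀ s : Finset (Fin 5), s.card = 3 →
    (s = {0,1,2} ∨ s = {0,1,3} ∨ s = {0,1,4} ∨ s = {0,2,3} ∨ s = {0,2,4} ∨ s = {0,3,4} ∨
      s = {1,2,3} ∨ s = {1,2,4} ∨ s = {1,3,4} ∨ s = {2,3,4}) := by decide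

theorem rangeP (a b c d : V) (hli : LinearIndependent k ![a, b, c, d]) :
    pointsOf k {a, b, c, d, b - a, c - a, d - a, c - b, d - b, c - d} = Set.range (ptd a b c d hli) := by
  ext p
  constructor
  · rintro ⟨v, hv, hs⟩
    simp only [Set.mem_insert_iff, Set.mem_singleton_iff] at hv
    have key : ∀ i : Fin 10, v = fmd k a b c d (Xv k i) → p ∈ Set.range (ptd a b c d hli) := by
      intro i he
      refine ⟨i, Projectivization.submodule_injective ?_⟩
      rw [hs, ptd_submodule, he]
    rcases hv with h|h|h|h|h|h|h|h|h|h
    exacts [key 0 (h.trans (fmd_Xv0 a b c d).symm), key 1 (h.trans (fmd_Xv1 a b c d).symm), key 2 (h.trans (fmd_Xv2 a b c d).symm), key 3 (h.trans (fmd_Xv3 a b c d).symm), key 4 (h.trans (fmd_Xv4 a b c d).symm), key 5 (h.trans (fmd_Xv5 a b c d).symm), key 6 (h.trans (fmd_Xv6 a b c d).symm), key 7 (h.trans (fmd_Xv7 a b c d).symm), key 8 (h.trans (fmd_Xv8 a b c d).symm), key 9 (h.trans (fmd_Xv9 a b c d).symm)]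
  · rintro ⟨i, rfl⟩
    refine ⟨fmd k a b c d (Xv k i), ?_, ptd_submodule a b c d hli i⟩
    fin_cases i
    · show fmd k a b c d (Xv k 0) ∈ ({a, b, c, d, b - a, c - a, d - a, c - b, d - b, c - d} : Set V)
      rw [fmd_Xv0 a b c d]
      simp [Set.mem_insert_iff]
    · show fmd k a b c d (Xv k 1) ∈ ({a, b, c, d, b - a, c - a, d - a, c - b, d - b, c - d} : Set V)
      rw [fmd_Xv1 a b c d]
      simp [Set.mem_insert_iff]
    · show fmd k a b c d (Xv k 2) ∈ ({a, b, c, d, b - a, c - a, d - a, c - b, d - b, c - d} : Set V)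
      rw [fmd_Xv2 a b c d]
      simp [Set.mem_insert_iff]
    · show fmd k a b c d (Xv k 3) ∈ ({a, b, c, d, b - a, c - a, d - a, c - b, d - b, c - d} : Set V)
      rw [fmd_Xv3 a b c d]
      simp [Set.mem_insert_iff]
    · show fmd k a b c d (Xv k 4) ∈ ({a, b, c, d, b - a, c - a, d - a, c - b, d - b, c - d} : Set V)
      rw [fmd_Xv4 a b c d]
      simp [Set.mem_insert_iff]
    · show fmd k a b c d (Xv k 5) ∈ ({a, b, c, d, b - a, c - a, d - a, c - b, d - b, c - d} : Set V)
      rw [fmd_Xv5 a b c d]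
      simp [Set.mem_insert_iff]
    · show fmd k a b c d (Xv k 6) ∈ ({a, b, c, d, b - a, c - a, d - a, c - b, d - b, c - d} : Set V)
      rw [fmd_Xv6 a b c d]
      simp [Set.mem_insert_iff]
    · show fmd k a b c d (Xv k 7) ∈ ({a, b, c, d, b - a, c - a, d - a, c - b, d - b, c - d} : Set V)
      rw [fmd_Xv7 a b c d]
      simp [Set.mem_insert_iff]
    · show fmd k a b c d (Xv k 8) ∈ ({a, b, c, d, b - a, c - a, d - a, c - b, d - b, c - d} : Set V)
      rw [fmd_Xv8 a b c d]
      simp [Set.mem_insert_iff]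
    · show fmd k a b c d (Xv k 9) ∈ ({a, b, c, d, b - a, c - a, d - a, c - b, d - b, c - d} : Set V)
      rw [fmd_Xv9 a b c d]
      simp [Set.mem_insert_iff]

end Desarg


/-- If `a, b, c, d` are linearly independent vectors in a `k`-vector space `V`, then the ten
points `[a],[b],[c],[d],[b-a],[c-a],[d-a],[c-b],[d-b],[c-d]` together with the ten lines
`L_T`, for `T` a three-element subset of `{0,a,b,c,d}`, form a Desargues configuration
(and each of the subspaces defining the lines is `2`-dimensional). -/
theorem desargues_configuration_of_linearIndependent
    {k : Type*} [Field k] {V : Type*} [AddCommGroup V] [Module k V]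
    (a b c d : V) (hli : LinearIndependent k ![a, b, c, d]) :
    (∀ s : Finset (Fin 5), s.card = 3 →
      Module.finrank k (diffSpan k ((![0, a, b, c, d]) '' ↑s)) = 2) ∧
    IsDesarguesConfig
      (pointsOf k {a, b, c, d, b - a, c - a, d - a, c - b, d - b, c - d})
      (desarguesLines k ![0, a, b, c, d]) := by
  have hinj := Desarg.fmd_inj hli
  constructor
  · intro s hs
    rcases Desarg.subsets_card3 s hs with rfl|rfl|rfl|rfl|rfl|rfl|rfl|rfl|rfl|rfl
    · rw [Desarg.line_eq0 a b c d]
      exact Desarg.finrank_map_pair hinj (Desarg.Wv_li 0)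
    · rw [Desarg.line_eq1 a b c d]
      exact Desarg.finrank_map_pair hinj (Desarg.Wv_li 1)
    · rw [Desarg.line_eq2 a b c d]
      exact Desarg.finrank_map_pair hinj (Desarg.Wv_li 2)
    · rw [Desarg.line_eq3 a b c d]
      exact Desarg.finrank_map_pair hinj (Desarg.Wv_li 3)
    · rw [Desarg.line_eq4 a b c d]
      exact Desarg.finrank_map_pair hinj (Desarg.Wv_li 4)
    · rw [Desarg.line_eq5 a b c d]
      exact Desarg.finrank_map_pair hinj (Desarg.Wv_li 5)
    · rw [Desarg.line_eq6 a b c d]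
      exact Desarg.finrank_map_pair hinj (Desarg.Wv_li 6)
    · rw [Desarg.line_eq7 a b c d]
      exact Desarg.finrank_map_pair hinj (Desarg.Wv_li 7)
    · rw [Desarg.line_eq8 a b c d]
      exact Desarg.finrank_map_pair hinj (Desarg.Wv_li 8)
    · rw [Desarg.line_eq9 a b c d]
      exact Desarg.finrank_map_pair hinj (Desarg.Wv_li 9)
  · have hM : desarguesLines k ![0, a, b, c, d] = Set.range (Desarg.Lnd a b c d) := by
      ext L
      constructor
      · rintro ⟨s, hs, rfl⟩
        rcases Desarg.subsets_card3 s hs with rfl|rfl|rfl|rfl|rfl|rfl|rfl|rfl|rfl|rfl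
        exacts [
          ⟨0, (congrArg (fun W : Submodule k V => {p : Projectivization k V | p.submodule ≤ W}) (Desarg.line_eq0 a b c d)).symm⟩,
          ⟨1, (congrArg (fun W : Submodule k V => {p : Projectivization k V | p.submodule ≤ W}) (Desarg.line_eq1 a b c d)).symm⟩,
          ⟨2, (congrArg (fun W : Submodule k V => {p : Projectivization k V | p.submodule ≤ W}) (Desarg.line_eq2 a b c d)).symm⟩,
          ⟨3, (congrArg (fun W : Submodule k V => {p : Projectivization k V | p.submodule ≤ W}) (Desarg.line_eq3 a b c d)).symm⟩,
          ⟨4, (congrArg (fun W : Submodule k V => {p : Projectivization k V | p.submodule ≤ W}) (Desarg.line_eq4 a b c d)).symm⟩,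
          ⟨5, (congrArg (fun W : Submodule k V => {p : Projectivization k V | p.submodule ≤ W}) (Desarg.line_eq5 a b c d)).symm⟩,
          ⟨6, (congrArg (fun W : Submodule k V => {p : Projectivization k V | p.submodule ≤ W}) (Desarg.line_eq6 a b c d)).symm⟩,
          ⟨7, (congrArg (fun W : Submodule k V => {p : Projectivization k V | p.submodule ≤ W}) (Desarg.line_eq7 a b c d)).symm⟩,
          ⟨8, (congrArg (fun W : Submodule k V => {p : Projectivization k V | p.submodule ≤ W}) (Desarg.line_eq8 a b c d)).symm⟩,
          ⟨9, (congrArg (fun W : Submodule k V => {p : Projectivization k V | p.submodule ≤ W}) (Desarg.line_eq9 a b c d)).symm⟩]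
      · rintro ⟨t, rfl⟩
        fin_cases t
        exacts [
          ⟨({0, 1, 2} : Finset (Fin 5)), by decide, (congrArg (fun W : Submodule k V => {p : Projectivization k V | p.submodule ≤ W}) (Desarg.line_eq0 a b c d).symm)⟩,
          ⟨({0, 1, 3} : Finset (Fin 5)), by decide, (congrArg (fun W : Submodule k V => {p : Projectivization k V | p.submodule ≤ W}) (Desarg.line_eq1 a b c d).symm)⟩,
          ⟨({0, 1, 4} : Finset (Fin 5)), by decide, (congrArg (fun W : Submodule k V => {p : Projectivization k V | p.submodule ≤ W}) (Desarg.line_eq2 a b c d).symm)⟩,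
          ⟨({0, 2, 3} : Finset (Fin 5)), by decide, (congrArg (fun W : Submodule k V => {p : Projectivization k V | p.submodule ≤ W}) (Desarg.line_eq3 a b c d).symm)⟩,
          ⟨({0, 2, 4} : Finset (Fin 5)), by decide, (congrArg (fun W : Submodule k V => {p : Projectivization k V | p.submodule ≤ W}) (Desarg.line_eq4 a b c d).symm)⟩,
          ⟨({0, 3, 4} : Finset (Fin 5)), by decide, (congrArg (fun W : Submodule k V => {p : Projectivization k V | p.submodule ≤ W}) (Desarg.line_eq5 a b c d).symm)⟩,
          ⟨({1, 2, 3} : Finset (Fin 5)), by decide, (congrArg (fun W : Submodule k V => {p : Projectivization k V | p.submodule ≤ W}) (Desarg.line_eq6 a b c d).symm)⟩,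
          ⟨({1, 2, 4} : Finset (Fin 5)), by decide, (congrArg (fun W : Submodule k V => {p : Projectivization k V | p.submodule ≤ W}) (Desarg.line_eq7 a b c d).symm)⟩,
          ⟨({1, 3, 4} : Finset (Fin 5)), by decide, (congrArg (fun W : Submodule k V => {p : Projectivization k V | p.submodule ≤ W}) (Desarg.line_eq8 a b c d).symm)⟩,
          ⟨({2, 3, 4} : Finset (Fin 5)), by decide, (congrArg (fun W : Submodule k V => {p : Projectivization k V | p.submodule ≤ W}) (Desarg.line_eq9 a b c d).symm)⟩]
    have hPL : ∀ t : Fin 10,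
        pointsOf k {a, b, c, d, b - a, c - a, d - a, c - b, d - b, c - d} ∩ Desarg.Lnd a b c d t
          = {Desarg.ptd a b c d hli (Desarg.g1 t), Desarg.ptd a b c d hli (Desarg.g2 t),
              Desarg.ptd a b c d hli (Desarg.g3 t)} := by
      intro t
      rw [Desarg.rangeP a b c d hli]
      ext p
      simp only [Set.mem_inter_iff, Set.mem_insert_iff, Set.mem_singleton_iff]
      constructor
      · rintro ⟨⟨i, rfl⟩, hmem⟩
        rcases (Desarg.key_inc a b c d hli t i).mp hmem with rfl|rfl|rfl
        · exact Or.inl rfl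
        · exact Or.inr (Or.inl rfl)
        · exact Or.inr (Or.inr rfl)
      · intro hp
        rcases hp with rfl|rfl|rfl
        · exact ⟨⟨_, rfl⟩, (Desarg.key_inc a b c d hli t _).mpr (Or.inl rfl)⟩
        · exact ⟨⟨_, rfl⟩, (Desarg.key_inc a b c d hli t _).mpr (Or.inr (Or.inl rfl))⟩
        · exact ⟨⟨_, rfl⟩, (Desarg.key_inc a b c d hli t _).mpr (Or.inr (Or.inr rfl))⟩
    refine ⟨?_, ?_, ?_, ?_⟩
    · rw [Desarg.rangeP a b c d hli, ← Set.image_univ,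
        Set.ncard_image_of_injective _ (Desarg.ptd_inj a b c d hli), Set.ncard_univ,
        Nat.card_eq_fintype_card, Fintype.card_fin]
    · rw [hM, ← Set.image_univ,
        Set.ncard_image_of_injective _ (Desarg.Lnd_inj a b c d hli), Set.ncard_univ,
        Nat.card_eq_fintype_card, Fintype.card_fin]
    · intro L hL
      rw [hM] at hL
      obtain ⟨t, rfl⟩ := hL
      rw [hPL t]
      exact Set.ncard_eq_three.mpr ⟨_, _, _,
        (Desarg.ptd_inj a b c d hli).ne (Desarg.g_ne t).1,
        (Desarg.ptd_inj a b c d hli).ne (Desarg.g_ne t).2.1,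
        (Desarg.ptd_inj a b c d hli).ne (Desarg.g_ne t).2.2, rfl⟩
    · intro p hp
      rw [Desarg.rangeP a b c d hli] at hp
      obtain ⟨i, rfl⟩ := hp
      have hset : {L | L ∈ desarguesLines k ![0, a, b, c, d] ∧ Desarg.ptd a b c d hli i ∈ L}
          = {Desarg.Lnd a b c d (Desarg.l1 i), Desarg.Lnd a b c d (Desarg.l2 i),
              Desarg.Lnd a b c d (Desarg.l3 i)} := by
        ext L
        simp only [Set.mem_setOf_eq, Set.mem_insert_iff, Set.mem_singleton_iff]
        constructor
        · rintro ⟨hLM, hpL⟩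
          rw [hM] at hLM
          obtain ⟨t, rfl⟩ := hLM
          rcases (Desarg.dual_spec i t).mp ((Desarg.key_inc a b c d hli t i).mp hpL) with rfl|rfl|rfl
          · exact Or.inl rfl
          · exact Or.inr (Or.inl rfl)
          · exact Or.inr (Or.inr rfl)
        · intro hL
          rcases hL with rfl|rfl|rfl
          · exact ⟨by rw [hM]; exact ⟨_, rfl⟩,
              (Desarg.key_inc a b c d hli _ i).mpr ((Desarg.dual_spec i _).mpr (Or.inl rfl))⟩
          · exact ⟨by rw [hM]; exact ⟨_, rfl⟩,
              (Desarg.key_inc a b c d hli _ i).mpr ((Desarg.dual_spec i _).mpr (Or.inr (Or.inl rfl)))⟩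
          · exact ⟨by rw [hM]; exact ⟨_, rfl⟩,
              (Desarg.key_inc a b c d hli _ i).mpr ((Desarg.dual_spec i _).mpr (Or.inr (Or.inr rfl)))⟩
      rw [hset]
      exact Set.ncard_eq_three.mpr ⟨_, _, _,
        (Desarg.Lnd_inj a b c d hli).ne (Desarg.dual_ne i).1,
        (Desarg.Lnd_inj a b c d hli).ne (Desarg.dual_ne i).2.1,
        (Desarg.Lnd_inj a b c d hli).ne (Desarg.dual_ne i).2.2, rfl⟩
end
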